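/- arXiv:2602.12001 — 3 statements merged into one kernel-verified Lean document; each statement's English description precedes it below -/
import Mathlib

section
/- Let n ≥ 1, r₀ > 0, β > 1, and φ ∈ C_c^∞(B_{r₀}) with B_{r₀} ⊂ ℝⁿ. Writing x = (x₁, x′) ∈ ℝ × ℝ^{n−1}, one has ∫_{B_{r₀}} |x₁|^{β−2} φ(x)² dx ≤ (2/(β−1))² ∫_{B_{r₀}} |x₁|^{β} |∇φ(x)|² dx. -/
open MeasureTheory Metric Real Filter Asymptotics Bornology
open scoped RealInnerProductSpace Topology

noncomputable section

/-- Euclidean space `ℝⁿ`. -/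
abbrev Euc (n : ℕ) := EuclideanSpace ℝ (Fin n)

/-- `φ` is an admissible test function on `Ω`: smooth with compact support contained in `Ω`
(i.e. `φ ∈ C_c^∞(Ω)`). -/
def IsTestFun {n : ℕ} (Ω : Set (Euc n)) (φ : Euc n → ℝ) : Prop :=
  ContDiff ℝ (⊤ : ℕ∞) φ ∧ HasCompactSupport φ ∧ tsupport φ ⊆ Ω

/-- `u` is a weak solution of the mean curvature equation
`div(∇u/√(1+|∇u|²)) = -f(u)` in `Ω`:  `u ∈ W^{1,1}_loc(Ω)`, `f(u) ∈ L¹_loc(Ω)` and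
`∫_Ω ∇u·∇φ/√(1+|∇u|²) = ∫_Ω f(u) φ` for every `φ ∈ C_c^∞(Ω)`. -/
def IsWeakSolution {n : ℕ} (Ω : Set (Euc n)) (f : ℝ → ℝ) (u : Euc n → ℝ) : Prop :=
  LocallyIntegrableOn u Ω ∧
  LocallyIntegrableOn (fun x => ‖gradient u x‖) Ω ∧
  LocallyIntegrableOn (fun x => f (u x)) Ω ∧
  ∀ φ : Euc n → ℝ, IsTestFun Ω φ →
    ∫ x in Ω, ⟪gradient u x, gradient φ x⟫ / Real.sqrt (1 + ‖gradient u x‖ ^ 2)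
      = ∫ x in Ω, f (u x) * φ x

/-- `u` is a stable solution of `div(∇u/√(1+|∇u|²)) = -f(u)` in `Ω`: it is a weak solution,
`f'(u) ∈ L¹_loc(Ω)` and the second variation of the energy at `u` is nonnegative:
`∫_Ω f'(u) ξ² ≤ ∫_Ω (|∇ξ|²/√(1+|∇u|²) - (∇u·∇ξ)²/(1+|∇u|²)^{3/2})` for all `ξ ∈ C_c^∞(Ω)`. -/
def IsStableSolution {n : ℕ} (Ω : Set (Euc n)) (f : ℝ → ℝ) (u : Euc n → ℝ) : Prop :=
  IsWeakSolution Ω f u ∧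
  LocallyIntegrableOn (fun x => deriv f (u x)) Ω ∧
  ∀ ξ : Euc n → ℝ, IsTestFun Ω ξ →
    ∫ x in Ω, deriv f (u x) * ξ x ^ 2 ≤
      ∫ x in Ω, (‖gradient ξ x‖ ^ 2 / Real.sqrt (1 + ‖gradient u x‖ ^ 2)
        - ⟪gradient u x, gradient ξ x⟫ ^ 2 / (1 + ‖gradient u x‖ ^ 2) ^ ((3:ℝ)/2))

/-- A vector field `g` belongs to the Morrey space `M^p(Ω)`: there is `K > 0` with
`∫_{B_ρ(x₀) ∩ Ω} |g| ≤ K ρ^{n(1-1/p)}` for all `x₀ ∈ Ω` and `0 < ρ ≤ diam Ω`. -/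
def MemMorrey {n : ℕ} (Ω : Set (Euc n)) (p : ℝ) (g : Euc n → Euc n) : Prop :=
  ∃ K > (0:ℝ), ∀ x₀ ∈ Ω, ∀ ρ : ℝ, 0 < ρ → ρ ≤ Metric.diam Ω →
    ∫ x in Metric.ball x₀ ρ ∩ Ω, ‖g x‖ ≤ K * ρ ^ ((n : ℝ) * (1 - 1 / p))

section HardyHelpers
open Set intervalIntegral
open scoped ENNReal



lemma csReal {μ : Measure ℝ} {f g : ℝ → ℝ} (hfm : AEStronglyMeasurable f μ)
    (hgm : AEStronglyMeasurable g μ) (hfn : 0 ≤ᵐ[μ] f) (hgn : 0 ≤ᵐ[μ] g)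
    (hf2 : Integrable (fun t => f t ^ 2) μ) (hg2 : Integrable (fun t => g t ^ 2) μ) :
    ∫ t, f t * g t ∂μ ≤ Real.sqrt (∫ t, f t ^ 2 ∂μ) * Real.sqrt (∫ t, g t ^ 2 ∂μ) := by
  have hpq : Real.HolderConjugate 2 2 := Real.holderConjugate_iff.mpr ⟨one_lt_two, by norm_num⟩
  have h2 : (ENNReal.ofReal 2) = 2 := by
    rw [show (2:ℝ≥0∞) = ENNReal.ofReal (2:ℝ) by norm_num]
  have hf : MemLp f (ENNReal.ofReal 2) μ := by
    rw [h2]; exact (memLp_two_iff_integrable_sq hfm).mpr hf2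
  have hg : MemLp g (ENNReal.ofReal 2) μ := by
    rw [h2]; exact (memLp_two_iff_integrable_sq hgm).mpr hg2
  have H := integral_mul_le_Lp_mul_Lq_of_nonneg hpq hfn hgn hf hg
  have e1 : ∀ h : ℝ → ℝ, ∫ t, h t ^ (2:ℝ) ∂μ = ∫ t, h t ^ 2 ∂μ := by
    intro h; apply MeasureTheory.integral_congr_ae; filter_upwards with t
    rw [show (2:ℝ) = ((2:ℕ):ℝ) by norm_num, Real.rpow_natCast]
  rw [e1 f, e1 g] at H
  calc ∫ t, f t * g t ∂μ
      ≤ (∫ t, f t ^ 2 ∂μ) ^ ((1:ℝ)/2) * (∫ t, g t ^ 2 ∂μ) ^ ((1:ℝ)/2) := H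
    _ = _ := by rw [← Real.sqrt_eq_rpow, ← Real.sqrt_eq_rpow]

lemma intA (β : ℝ) (hβ : 1 < β) {ψ : ℝ → ℝ} (hc : Continuous ψ) (M : ℝ) (hM : 0 < M) :
    IntegrableOn (fun t => t ^ (β - 2) * ψ t ^ 2) (Ioc 0 M) := by
  obtain ⟨C, hC⟩ := (isCompact_Icc (a := (0:ℝ)) (b := M)).exists_bound_of_continuousOn
    hc.continuousOn
  have h1 : IntegrableOn (fun t : ℝ => t ^ (β - 2)) (Ioc 0 M) := by
    have := intervalIntegral.intervalIntegrable_rpow' (a := 0) (b := M) (r := β - 2)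
      (by linarith)
    rwa [intervalIntegrable_iff_integrableOn_Ioc_of_le hM.le] at this
  refine (h1.const_mul (C ^ 2)).mono' ?_ ?_
  · exact (((by measurability : Measurable fun t : ℝ => t ^ (β-2))).mul ((hc.measurable).pow_const 2)).aestronglyMeasurable
  · filter_upwards [ae_restrict_mem measurableSet_Ioc] with t ht
    have ht0 : (0:ℝ) ≤ t := ht.1.le
    have hrn : (0:ℝ) ≤ t ^ (β - 2) := Real.rpow_nonneg ht0 _
    have hψ2 : ψ t ^ 2 ≤ C ^ 2 := by
      have := hC t ⟨ht0, ht.2⟩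
      have h1 : |ψ t| ≤ C := by simpa using this
      nlinarith [abs_nonneg (ψ t), sq_abs (ψ t)]
    have : ‖t ^ (β - 2) * ψ t ^ 2‖ = t ^ (β - 2) * ψ t ^ 2 := by
      rw [Real.norm_of_nonneg (mul_nonneg hrn (sq_nonneg _))]
    rw [this]
    calc t ^ (β - 2) * ψ t ^ 2 ≤ t ^ (β - 2) * C ^ 2 :=
          mul_le_mul_of_nonneg_left hψ2 hrn
      _ = C ^ 2 * t ^ (β - 2) := by ring

lemma intB (β : ℝ) (hβ : 1 < β) {ρ : ℝ → ℝ} (hc : Continuous ρ) (M : ℝ) (hM : 0 < M) :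
    IntegrableOn (fun t => t ^ β * ρ t ^ 2) (Ioc 0 M) := by
  have hco : ContinuousOn (fun t : ℝ => t ^ β * ρ t ^ 2) (Icc 0 M) :=
    (continuousOn_id.rpow_const (fun t _ => Or.inr (by linarith))).mul
      ((hc.pow 2).continuousOn)
  exact (hco.integrableOn_compact isCompact_Icc).mono_set Ioc_subset_Icc_self

lemma hardy_Ioc (β : ℝ) (hβ : 1 < β) (ψ : ℝ → ℝ) (hψ : ContDiff ℝ (⊤ : ℕ∞) ψ)
    (M : ℝ) (hM : 0 < M) (hzM : ψ M = 0) :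
    ∫ t in Ioc (0:ℝ) M, t ^ (β - 2) * ψ t ^ 2 ≤
      (2 / (β - 1)) ^ 2 * ∫ t in Ioc (0:ℝ) M, t ^ β * (deriv ψ t) ^ 2 := by
  have hβ1 : (0:ℝ) < β - 1 := by linarith
  have hcψ : Continuous ψ := hψ.continuous
  have hcψ' : Continuous (deriv ψ) := hψ.continuous_deriv (by simp)
  have hIA : IntegrableOn (fun t => t ^ (β - 2) * ψ t ^ 2) (Ioc 0 M) := intA β hβ hcψ M hM
  have hIB : IntegrableOn (fun t => t ^ β * (deriv ψ t) ^ 2) (Ioc 0 M) := intB β hβ hcψ' M hM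
  set B := ∫ t in Ioc (0:ℝ) M, t ^ β * (deriv ψ t) ^ 2 with hBdef
  have hB0 : 0 ≤ B := setIntegral_nonneg measurableSet_Ioc fun t ht =>
    mul_nonneg (Real.rpow_nonneg ht.1.le _) (sq_nonneg _)
  have key : ∀ ε : ℝ, 0 < ε → ε ≤ M →
      ∫ t in Ioc ε M, t ^ (β - 2) * ψ t ^ 2 ≤ (2 / (β - 1)) ^ 2 * B := by
    intro ε hε hεM
    set Aε := ∫ t in Ioc ε M, t ^ (β - 2) * ψ t ^ 2 with hAdef
    have hIAε : IntegrableOn (fun t => t ^ (β - 2) * ψ t ^ 2) (Ioc ε M) :=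
      hIA.mono_set (Ioc_subset_Ioc_left hε.le)
    have hIBε : IntegrableOn (fun t => t ^ β * (deriv ψ t) ^ 2) (Ioc ε M) :=
      hIB.mono_set (Ioc_subset_Ioc_left hε.le)
    have hA0 : 0 ≤ Aε := setIntegral_nonneg measurableSet_Ioc fun t ht =>
      mul_nonneg (Real.rpow_nonneg ((hε.trans_le ht.1.le).le)  _) (sq_nonneg _)
    have hpos : ∀ t ∈ Set.uIcc ε M, 0 < t := by
      intro t ht; rw [Set.uIcc_of_le hεM] at ht; exact lt_of_lt_of_le hε ht.1
    have hderiv : ∀ t ∈ Set.uIcc ε M, HasDerivAt (fun s => s ^ (β - 1) * ψ s ^ 2)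
        ((β - 1) * t ^ (β - 2) * ψ t ^ 2 + t ^ (β - 1) * (2 * ψ t * deriv ψ t)) t := by
      intro t ht
      have ht0 := hpos t ht
      have h1 : HasDerivAt (fun s : ℝ => s ^ (β - 1)) ((β - 1) * t ^ (β - 1 - 1)) t :=
        Real.hasDerivAt_rpow_const (Or.inl ht0.ne')
      have h2 : HasDerivAt (fun s => ψ s ^ 2) (2 * ψ t ^ 1 * deriv ψ t) t :=
        ((hψ.differentiable (by simp) t).hasDerivAt).pow 2
      have h3 := h1.mul h2
      refine h3.congr_deriv ?_
      rw [show β - 1 - 1 = β - 2 by ring]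
      ring
    have hco1 : ContinuousOn (fun t : ℝ => (β - 1) * t ^ (β - 2) * ψ t ^ 2) (Set.uIcc ε M) :=
      (continuousOn_const.mul (continuousOn_id.rpow_const fun t ht =>
        Or.inl (hpos t ht).ne')).mul ((hcψ.continuousOn).pow 2)
    have hco2 : ContinuousOn (fun t : ℝ => t ^ (β - 1) * (2 * ψ t * deriv ψ t)) (Set.uIcc ε M) :=
      (continuousOn_id.rpow_const fun t ht => Or.inl (hpos t ht).ne').mul
        ((continuousOn_const.mul hcψ.continuousOn).mul hcψ'.continuousOn)
    have hFTC := intervalIntegral.integral_eq_sub_of_hasDerivAt hderiv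
      ((hco1.add hco2).intervalIntegrable)
    rw [intervalIntegral.integral_add (hco1.intervalIntegrable) (hco2.intervalIntegrable)]
      at hFTC
    have e1 : ∫ t in ε..M, (β - 1) * t ^ (β - 2) * ψ t ^ 2
        = (β - 1) * ∫ t in ε..M, t ^ (β - 2) * ψ t ^ 2 := by
      rw [← intervalIntegral.integral_const_mul]
      apply intervalIntegral.integral_congr
      intro t ht; ring
    have hnn : 0 ≤ ε ^ (β - 1) * ψ ε ^ 2 :=
      mul_nonneg (Real.rpow_nonneg hε.le _) (sq_nonneg _)
    rw [hzM, e1] at hFTC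
    have hle : (β - 1) * ∫ t in ε..M, t ^ (β - 2) * ψ t ^ 2 ≤
        - ∫ t in ε..M, t ^ (β - 1) * (2 * ψ t * deriv ψ t) := by nlinarith [hFTC]
    have habs : - ∫ t in ε..M, t ^ (β - 1) * (2 * ψ t * deriv ψ t)
        ≤ ∫ t in ε..M, |t ^ (β - 1) * (2 * ψ t * deriv ψ t)| := by
      rw [← intervalIntegral.integral_neg]
      exact intervalIntegral.integral_mono_on hεM (hco2.intervalIntegrable.neg)
        (hco2.intervalIntegrable.abs) (fun t ht => neg_le_abs _)
    have hcongr : ∫ t in ε..M, |t ^ (β - 1) * (2 * ψ t * deriv ψ t)|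
        = ∫ t in ε..M, 2 * ((t ^ ((β - 2)/2) * |ψ t|) * (t ^ (β/2) * |deriv ψ t|)) := by
      apply intervalIntegral.integral_congr
      intro t ht
      have ht0 := hpos t ht
      have e : |t ^ (β - 1)| = t ^ ((β - 2)/2) * t ^ (β/2) := by
        rw [abs_of_nonneg (Real.rpow_nonneg ht0.le _), ← Real.rpow_add ht0]
        congr 1; ring
      show |t ^ (β - 1) * (2 * ψ t * deriv ψ t)|
          = 2 * (t ^ ((β - 2)/2) * |ψ t| * (t ^ (β/2) * |deriv ψ t|))
      rw [abs_mul, e, abs_mul, abs_mul, abs_two]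
      ring
    -- Cauchy-Schwarz
    set f : ℝ → ℝ := fun t => t ^ ((β - 2)/2) * |ψ t|
    set g : ℝ → ℝ := fun t => t ^ (β/2) * |deriv ψ t|
    have hposIoc : ∀ t ∈ Ioc ε M, 0 < t := fun t ht => hε.trans_le ht.1.le
    have hfm : AEStronglyMeasurable f (volume.restrict (Ioc ε M)) :=
      (((continuousOn_id.rpow_const fun t ht => Or.inl (hposIoc t ht).ne')).mul
        (hcψ.continuousOn.abs)).aestronglyMeasurable measurableSet_Ioc
    have hgm : AEStronglyMeasurable g (volume.restrict (Ioc ε M)) :=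
      (((continuousOn_id.rpow_const fun t ht => Or.inl (hposIoc t ht).ne')).mul
        (hcψ'.continuousOn.abs)).aestronglyMeasurable measurableSet_Ioc
    have hfn : 0 ≤ᵐ[volume.restrict (Ioc ε M)] f := by
      filter_upwards [ae_restrict_mem measurableSet_Ioc] with t ht
      exact mul_nonneg (Real.rpow_nonneg (hposIoc t ht).le _) (abs_nonneg _)
    have hgn : 0 ≤ᵐ[volume.restrict (Ioc ε M)] g := by
      filter_upwards [ae_restrict_mem measurableSet_Ioc] with t ht
      exact mul_nonneg (Real.rpow_nonneg (hposIoc t ht).le _) (abs_nonneg _)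
    have hsqf : ∀ t ∈ Ioc ε M, f t ^ 2 = t ^ (β - 2) * ψ t ^ 2 := by
      intro t ht
      have ht0 := hposIoc t ht
      simp only [f, mul_pow, sq_abs]
      congr 1
      rw [← Real.rpow_natCast (t ^ ((β - 2)/2)) 2, ← Real.rpow_mul ht0.le]
      norm_num
    have hsqg : ∀ t ∈ Ioc ε M, g t ^ 2 = t ^ β * (deriv ψ t) ^ 2 := by
      intro t ht
      have ht0 := hposIoc t ht
      simp only [g, mul_pow, sq_abs]
      congr 1
      rw [← Real.rpow_natCast (t ^ (β/2)) 2, ← Real.rpow_mul ht0.le]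
      norm_num
    have hf2 : Integrable (fun t => f t ^ 2) (volume.restrict (Ioc ε M)) := by
      apply hIAε.congr
      filter_upwards [ae_restrict_mem measurableSet_Ioc] with t ht
      exact (hsqf t ht).symm
    have hg2 : Integrable (fun t => g t ^ 2) (volume.restrict (Ioc ε M)) := by
      apply hIBε.congr
      filter_upwards [ae_restrict_mem measurableSet_Ioc] with t ht
      exact (hsqg t ht).symm
    have hCS := csReal hfm hgm hfn hgn hf2 hg2
    have ef2 : ∫ t in Ioc ε M, f t ^ 2 = Aε := by
      rw [hAdef]
      exact setIntegral_congr_fun measurableSet_Ioc hsqf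
    have eg2 : ∫ t in Ioc ε M, g t ^ 2 = ∫ t in Ioc ε M, t ^ β * (deriv ψ t) ^ 2 :=
      setIntegral_congr_fun measurableSet_Ioc hsqg
    have hBmono : ∫ t in Ioc ε M, t ^ β * (deriv ψ t) ^ 2 ≤ B := by
      rw [hBdef]
      refine setIntegral_mono_set hIB ?_ (HasSubset.Subset.eventuallyLE (Ioc_subset_Ioc_left hε.le))
      filter_upwards [ae_restrict_mem measurableSet_Ioc] with t ht
      exact mul_nonneg (Real.rpow_nonneg ht.1.le _) (sq_nonneg _)
    have hkey : (β - 1) * Aε ≤ 2 * (Real.sqrt Aε * Real.sqrt B) := by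
      have eA : Aε = ∫ t in ε..M, t ^ (β - 2) * ψ t ^ 2 :=
        (intervalIntegral.integral_of_le hεM).symm
      have e2 : ∫ t in ε..M, 2 * (f t * g t) = 2 * ∫ t in Ioc ε M, f t * g t := by
        rw [intervalIntegral.integral_const_mul, intervalIntegral.integral_of_le hεM]
      calc (β - 1) * Aε = (β - 1) * ∫ t in ε..M, t ^ (β - 2) * ψ t ^ 2 := by rw [← eA]
        _ ≤ - ∫ t in ε..M, t ^ (β - 1) * (2 * ψ t * deriv ψ t) := hle
        _ ≤ ∫ t in ε..M, |t ^ (β - 1) * (2 * ψ t * deriv ψ t)| := habs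
        _ = 2 * ∫ t in Ioc ε M, f t * g t := by rw [hcongr]; exact e2
        _ ≤ 2 * (Real.sqrt (∫ t in Ioc ε M, f t ^ 2) * Real.sqrt (∫ t in Ioc ε M, g t ^ 2)) :=
            mul_le_mul_of_nonneg_left hCS (by norm_num)
        _ ≤ 2 * (Real.sqrt Aε * Real.sqrt B) := by
            rw [ef2]
            refine mul_le_mul_of_nonneg_left ?_ (by norm_num)
            refine mul_le_mul_of_nonneg_left ?_ (Real.sqrt_nonneg _)
            refine Real.sqrt_le_sqrt ?_
            rw [eg2]; exact hBmono
    have hsq : (β - 1) ^ 2 * Aε ≤ 4 * B := by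
      nlinarith [hkey, Real.sq_sqrt hA0, Real.sq_sqrt hB0, Real.sqrt_nonneg Aε,
        Real.sqrt_nonneg B, hβ1, mul_le_mul_of_nonneg_left hkey hβ1.le,
        sq_nonneg ((β - 1) * Real.sqrt Aε - 2 * Real.sqrt B)]
    rw [div_pow, div_mul_eq_mul_div, le_div_iff₀ (by positivity : (0:ℝ) < (β-1)^2)]
    nlinarith [hsq]
  -- pass to the limit
  have hmono : Monotone (fun k : ℕ => Ioc (M / (k + 1)) M) := by
    intro k l hkl
    apply Ioc_subset_Ioc_left
    apply div_le_div_of_nonneg_left hM.le (by positivity)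
    have : (k : ℝ) ≤ l := Nat.cast_le.mpr hkl
    linarith
  have hunion : (⋃ k : ℕ, Ioc (M / (k + 1)) M) = Ioc 0 M := by
    ext t
    simp only [Set.mem_iUnion, Set.mem_Ioc]
    constructor
    · rintro ⟨k, h1, h2⟩
      have hpos : (0:ℝ) < M / (k + 1) := by positivity
      exact ⟨hpos.trans h1, h2⟩
    · rintro ⟨h1, h2⟩
      obtain ⟨k, hk⟩ := exists_nat_gt (M / t)
      refine ⟨k, ?_, h2⟩
      rw [div_lt_iff₀ (by positivity)]
      have h3 : M / t < (k : ℝ) + 1 := hk.trans (by linarith)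
      have h4 : M / t * t < ((k : ℝ) + 1) * t := mul_lt_mul_of_pos_right h3 h1
      rw [div_mul_cancel₀ _ h1.ne'] at h4
      rw [mul_comm]
      exact h4
  have htend := MeasureTheory.tendsto_setIntegral_of_monotone (fun k => measurableSet_Ioc)
    hmono (hunion ▸ hIA)
  rw [hunion] at htend
  refine le_of_tendsto' htend fun k => key _ (by positivity) ?_
  exact div_le_self hM.le (by push_cast; linarith [Nat.cast_nonneg (α := ℝ) k])

open scoped Topology in
lemma vanish_deriv {ψ : ℝ → ℝ} {M t : ℝ} (hz : ∀ s, M ≤ |s| → ψ s = 0) (ht : M < |t|) :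
    deriv ψ t = 0 := by
  have hopen : IsOpen {s : ℝ | M < |s|} := isOpen_lt continuous_const continuous_abs
  have hmem : {s : ℝ | M < |s|} ∈ 𝓝 t := hopen.mem_nhds ht
  have heq : ψ =ᶠ[𝓝 t] fun _ => (0:ℝ) := by
    filter_upwards [hmem] with s hs; exact hz s hs.le
  rw [heq.deriv_eq]; exact deriv_const _ _

lemma hardy_Ioi (β : ℝ) (hβ : 1 < β) (ψ : ℝ → ℝ) (hψ : ContDiff ℝ (⊤ : ℕ∞) ψ)
    (M : ℝ) (hM : 0 < M) (hz : ∀ t, M ≤ |t| → ψ t = 0) :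
    IntegrableOn (fun t => |t| ^ (β - 2) * ψ t ^ 2) (Ioi 0) ∧
    IntegrableOn (fun t => |t| ^ β * (deriv ψ t) ^ 2) (Ioi 0) ∧
    ∫ t in Ioi (0:ℝ), |t| ^ (β - 2) * ψ t ^ 2 ≤
      (2 / (β - 1)) ^ 2 * ∫ t in Ioi (0:ℝ), |t| ^ β * (deriv ψ t) ^ 2 := by
  have hcψ := hψ.continuous
  have hcψ' := hψ.continuous_deriv (by simp)
  have heq1 : EqOn (fun t : ℝ => t ^ (β - 2) * ψ t ^ 2)
      (fun t => |t| ^ (β - 2) * ψ t ^ 2) (Ioc 0 M) := by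
    intro t ht; simp only; rw [abs_of_pos ht.1]
  have heq2 : EqOn (fun t : ℝ => t ^ β * (deriv ψ t) ^ 2)
      (fun t => |t| ^ β * (deriv ψ t) ^ 2) (Ioc 0 M) := by
    intro t ht; simp only; rw [abs_of_pos ht.1]
  have hz1 : ∀ t ∈ Ioi M, (fun t : ℝ => |t| ^ (β - 2) * ψ t ^ 2) t = 0 := by
    intro t ht
    have : ψ t = 0 := hz t (le_trans (le_of_lt ht) (le_abs_self t))
    simp [this]
  have hz2 : ∀ t ∈ Ioi M, (fun t : ℝ => |t| ^ β * (deriv ψ t) ^ 2) t = 0 := by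
    intro t ht
    have : deriv ψ t = 0 := vanish_deriv hz (lt_of_lt_of_le ht (le_abs_self t))
    simp [this]
  have hIA : IntegrableOn (fun t => |t| ^ (β - 2) * ψ t ^ 2) (Ioc 0 M) :=
    (intA β hβ hcψ M hM).congr_fun heq1 measurableSet_Ioc
  have hIB : IntegrableOn (fun t => |t| ^ β * (deriv ψ t) ^ 2) (Ioc 0 M) :=
    (intB β hβ hcψ' M hM).congr_fun heq2 measurableSet_Ioc
  have hIA' : IntegrableOn (fun t => |t| ^ (β - 2) * ψ t ^ 2) (Ioi M) :=
    (integrableOn_zero (ε' := ℝ)).congr_fun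
      (fun t ht => (hz1 t ht).symm) measurableSet_Ioi
  have hIB' : IntegrableOn (fun t => |t| ^ β * (deriv ψ t) ^ 2) (Ioi M) :=
    (integrableOn_zero (ε' := ℝ)).congr_fun
      (fun t ht => (hz2 t ht).symm) measurableSet_Ioi
  have hU : Ioc (0:ℝ) M ∪ Ioi M = Ioi 0 := Ioc_union_Ioi_eq_Ioi hM.le
  have hIAU : IntegrableOn (fun t => |t| ^ (β - 2) * ψ t ^ 2) (Ioi 0) := by
    rw [← hU]; exact hIA.union hIA'
  have hIBU : IntegrableOn (fun t => |t| ^ β * (deriv ψ t) ^ 2) (Ioi 0) := by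
    rw [← hU]; exact hIB.union hIB'
  refine ⟨hIAU, hIBU, ?_⟩
  have hsplit : ∀ (F : ℝ → ℝ), IntegrableOn F (Ioc 0 M) → IntegrableOn F (Ioi M) →
      (∀ t ∈ Ioi M, F t = 0) → ∫ t in Ioi (0:ℝ), F t = ∫ t in Ioc (0:ℝ) M, F t := by
    intro F h1 h2 h3
    rw [← hU, setIntegral_union Ioc_disjoint_Ioi_same measurableSet_Ioi h1 h2,
      setIntegral_eq_zero_of_forall_eq_zero h3, add_zero]
  rw [hsplit _ hIA hIA' hz1, hsplit _ hIB hIB' hz2,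
    ← setIntegral_congr_fun measurableSet_Ioc heq1, ← setIntegral_congr_fun measurableSet_Ioc heq2]
  exact hardy_Ioc β hβ ψ hψ M hM (hz M (by rw [abs_of_pos hM]))

lemma hardy_line (β : ℝ) (hβ : 1 < β) (ψ : ℝ → ℝ) (hψ : ContDiff ℝ (⊤ : ℕ∞) ψ)
    (M : ℝ) (hM : 0 < M) (hz : ∀ t, M ≤ |t| → ψ t = 0) :
    Integrable (fun t => |t| ^ (β - 2) * ψ t ^ 2) ∧
    Integrable (fun t => |t| ^ β * (deriv ψ t) ^ 2) ∧
    ∫ t, |t| ^ (β - 2) * ψ t ^ 2 ≤ (2 / (β - 1)) ^ 2 * ∫ t, |t| ^ β * (deriv ψ t) ^ 2 := by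
  set F : ℝ → ℝ := fun t => |t| ^ (β - 2) * ψ t ^ 2 with hF
  set G : ℝ → ℝ := fun t => |t| ^ β * (deriv ψ t) ^ 2 with hG
  set ψ' : ℝ → ℝ := fun t => ψ (-t) with hψ'def
  have hψ'c : ContDiff ℝ (⊤ : ℕ∞) ψ' := hψ.comp contDiff_neg
  have hz' : ∀ t, M ≤ |t| → ψ' t = 0 := fun t ht => hz (-t) (by rwa [abs_neg])
  obtain ⟨hIA₁, hIB₁, hineq₁⟩ := hardy_Ioi β hβ ψ hψ M hM hz
  obtain ⟨hIA₂, hIB₂, hineq₂⟩ := hardy_Ioi β hβ ψ' hψ'c M hM hz'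
  have hFeq : (fun t : ℝ => |t| ^ (β - 2) * ψ' t ^ 2) = fun t => F (-t) := by
    funext t; simp only [hF, hψ'def, abs_neg]
  have hGeq : (fun t : ℝ => |t| ^ β * (deriv ψ' t) ^ 2) = fun t => G (-t) := by
    funext t
    simp only [hG, hψ'def, abs_neg]
    rw [deriv_comp_neg, neg_sq]
  rw [hFeq] at hIA₂
  rw [hGeq] at hIB₂
  rw [hFeq, hGeq] at hineq₂
  -- transfer integrability from Ioi 0 for t ↦ F (-t) to Iic 0 for F
  have hmap : (volume.restrict (Ici (0:ℝ))).map Neg.neg = volume.restrict (Iic (0:ℝ)) := by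
    conv => rhs; rw [← Measure.map_neg_eq_self (volume : Measure ℝ),
      measurableEmbedding_neg.restrict_map]
    simp
  have htrans : ∀ (H : ℝ → ℝ), AEStronglyMeasurable H (volume.restrict (Iic (0:ℝ))) →
      IntegrableOn (fun t => H (-t)) (Ioi 0) → IntegrableOn H (Iic 0) := by
    intro H hm hint
    rw [IntegrableOn, ← hmap, measurableEmbedding_neg.integrable_map_iff]
    have : IntegrableOn (fun t => H (-t)) (Ici 0) := by
      rwa [integrableOn_Ici_iff_integrableOn_Ioi]
    exact this
  have hFm : AEStronglyMeasurable F (volume.restrict (Iic (0:ℝ))) := by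
    apply AEStronglyMeasurable.restrict
    exact ((by measurability : Measurable fun t : ℝ => |t| ^ (β - 2)).mul
      ((hψ.continuous.measurable).pow_const 2)).aestronglyMeasurable
  have hGm : AEStronglyMeasurable G (volume.restrict (Iic (0:ℝ))) := by
    apply AEStronglyMeasurable.restrict
    exact ((by measurability : Measurable fun t : ℝ => |t| ^ β).mul
      (((hψ.continuous_deriv (by simp)).measurable).pow_const 2)).aestronglyMeasurable
  have hIA₃ : IntegrableOn F (Iic 0) := htrans F hFm hIA₂
  have hIB₃ : IntegrableOn G (Iic 0) := htrans G hGm hIB₂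
  have hFint : Integrable F := by
    rw [← integrableOn_univ, ← Set.Iic_union_Ioi (a := (0:ℝ))]
    exact hIA₃.union hIA₁
  have hGint : Integrable G := by
    rw [← integrableOn_univ, ← Set.Iic_union_Ioi (a := (0:ℝ))]
    exact hIB₃.union hIB₁
  refine ⟨hFint, hGint, ?_⟩
  have hFsplit := integral_Iic_add_Ioi (b := (0:ℝ)) hIA₃ hIA₁
  have hGsplit := integral_Iic_add_Ioi (b := (0:ℝ)) hIB₃ hIB₁
  have hFneg : ∫ t in Iic (0:ℝ), F t = ∫ t in Ioi (0:ℝ), F (-t) := by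
    rw [integral_comp_neg_Ioi, neg_zero]
  have hGneg : ∫ t in Iic (0:ℝ), G t = ∫ t in Ioi (0:ℝ), G (-t) := by
    rw [integral_comp_neg_Ioi, neg_zero]
  have hc : (0:ℝ) ≤ (2 / (β - 1)) ^ 2 := sq_nonneg _
  calc ∫ t, F t = (∫ t in Iic (0:ℝ), F t) + ∫ t in Ioi (0:ℝ), F t := hFsplit.symm
    _ ≤ (2 / (β - 1)) ^ 2 * (∫ t in Ioi (0:ℝ), G (-t))
        + (2 / (β - 1)) ^ 2 * ∫ t in Ioi (0:ℝ), G t := by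
        apply add_le_add
        · rw [hFneg]; exact hineq₂
        · exact hineq₁
    _ = (2 / (β - 1)) ^ 2 * ((∫ t in Iic (0:ℝ), G t) + ∫ t in Ioi (0:ℝ), G t) := by
        rw [hGneg]; ring
    _ = (2 / (β - 1)) ^ 2 * ∫ t, G t := by rw [hGsplit]

open scoped RealInnerProductSpace ENNReal Topology in
theorem hardy_main (n : ℕ) (hn : 1 ≤ n) (r₀ β : ℝ) (hr : 0 < r₀) (hβ : 1 < β)
    (φ : Euc n → ℝ) (hsm : ContDiff ℝ (⊤ : ℕ∞) φ) (hcs : HasCompactSupport φ)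
    (hsupp : tsupport φ ⊆ ball (0 : Euc n) r₀) :
    ∫ x in ball (0 : Euc n) r₀, |x ⟨0, hn⟩| ^ (β - 2) * φ x ^ 2 ≤
      (2 / (β - 1)) ^ 2 *
        ∫ x in ball (0 : Euc n) r₀, |x ⟨0, hn⟩| ^ β *
          ‖gradient φ x‖ ^ 2 := by
  obtain ⟨m, rfl⟩ : ∃ m, n = m + 1 := ⟨n - 1, by omega⟩
  classical
  set c : ℝ := (2 / (β - 1)) ^ 2 with hc
  have hc0 : 0 ≤ c := sq_nonneg _
  set F : Euc (m+1) → ℝ := fun x => |x 0| ^ (β - 2) * φ x ^ 2 with hF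
  set G : Euc (m+1) → ℝ := fun x => |x 0| ^ β * ‖gradient φ x‖ ^ 2 with hG
  -- basic continuity / measurability
  have hφc : Continuous φ := hsm.continuous
  have hgradc : Continuous (fun x => gradient φ x) :=
    (LinearIsometryEquiv.continuous _).comp (hsm.continuous_fderiv (by simp))
  have hproj : Continuous (fun x : Euc (m+1) => x 0) := (EuclideanSpace.proj (0 : Fin (m+1))).continuous
  have hFm : Measurable F :=
    ((by measurability : Measurable fun t : ℝ => |t| ^ (β - 2)).comp hproj.measurable).mul
      ((hφc.measurable).pow_const 2)
  have hGm : Measurable G :=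
    ((by measurability : Measurable fun t : ℝ => |t| ^ β).comp hproj.measurable).mul
      ((hgradc.norm.measurable).pow_const 2)
  have hFnn : ∀ x, 0 ≤ F x := fun x =>
    mul_nonneg (Real.rpow_nonneg (abs_nonneg _) _) (sq_nonneg _)
  have hGnn : ∀ x, 0 ≤ G x := fun x =>
    mul_nonneg (Real.rpow_nonneg (abs_nonneg _) _) (sq_nonneg _)
  -- vanishing outside the ball
  have hgrad0 : ∀ x : Euc (m+1), x ∉ ball (0:Euc (m+1)) r₀ → gradient φ x = 0 := by
    intro x hx
    have hxn : x ∉ tsupport φ := fun h => hx (hsupp h)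
    have heq : φ =ᶠ[𝓝 x] fun _ => (0:ℝ) := notMem_tsupport_iff_eventuallyEq.mp hxn
    rw [heq.gradient_eq]
    exact gradient_const x (0:ℝ)
  have hφ0 : ∀ x : Euc (m+1), x ∉ ball (0:Euc (m+1)) r₀ → φ x = 0 := fun x hx =>
    image_eq_zero_of_notMem_tsupport (fun h => hx (hsupp h))
  have hF0 : ∀ x : Euc (m+1), x ∉ ball (0:Euc (m+1)) r₀ → F x = 0 := by
    intro x hx; simp [hF, hφ0 x hx]
  have hG0 : ∀ x : Euc (m+1), x ∉ ball (0:Euc (m+1)) r₀ → G x = 0 := by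
    intro x hx; simp [hG, hgrad0 x hx]
  -- G is integrable
  have hGcont : Continuous G :=
    ((continuous_abs.comp hproj).rpow_const (fun x => Or.inr (by linarith))).mul
      (hgradc.norm.pow 2)
  have hGsupp : HasCompactSupport G := by
    apply HasCompactSupport.intro hcs
    intro x hx
    have : gradient φ x = 0 := by
      have heq : φ =ᶠ[𝓝 x] fun _ => (0:ℝ) := notMem_tsupport_iff_eventuallyEq.mp hx
      rw [heq.gradient_eq]; exact gradient_const x (0:ℝ)
    simp [hG, this]
  have hGint : Integrable G := hGcont.integrable_of_hasCompactSupport hGsupp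
  -- abs of first coordinate bounded by norm
  have hx0 : ∀ x : Euc (m+1), |x 0| ≤ ‖x‖ := by
    intro x
    have h := abs_real_inner_le_norm x (EuclideanSpace.single (0 : Fin (m+1)) (1:ℝ))
    rw [EuclideanSpace.inner_single_right, EuclideanSpace.norm_single] at h
    simpa using h
  -- slices
  set X : (Fin (m+1) → ℝ) → Euc (m+1) := fun v => (WithLp.equiv 2 (Fin (m+1) → ℝ)).symm v with hX
  set e₁ : Euc (m+1) := EuclideanSpace.single (0 : Fin (m+1)) (1:ℝ) with he₁
  have hcons : ∀ (t : ℝ) (y : Fin m → ℝ), X (Fin.cons t y) = X (Fin.cons 0 y) + t • e₁ := by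
    intro t y
    ext j
    rw [PiLp.add_apply, PiLp.smul_apply]
    induction j using Fin.cases with
    | zero => simp [hX, he₁]
    | succ i => simp [hX, he₁, EuclideanSpace.single_apply, Fin.succ_ne_zero i]
  have hconszero : ∀ (t : ℝ) (y : Fin m → ℝ), (X (Fin.cons t y)) 0 = t := fun _ _ => rfl
  set ψ : (Fin m → ℝ) → ℝ → ℝ := fun y t => φ (X (Fin.cons t y)) with hψ
  have hψeq : ∀ y, ψ y = fun t => φ (X (Fin.cons 0 y) + t • e₁) := by
    intro y; funext t; rw [hψ]; simp only; rw [hcons t y]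
  have hψsm : ∀ y, ContDiff ℝ (⊤ : ℕ∞) (ψ y) := by
    intro y; rw [hψeq y]
    exact hsm.comp (contDiff_const.add (contDiff_id.smul contDiff_const))
  have hψd : ∀ y t, HasDerivAt (ψ y) ((fderiv ℝ φ (X (Fin.cons t y))) e₁) t := by
    intro y t
    have hA : HasDerivAt (fun s : ℝ => X (Fin.cons 0 y) + s • e₁) e₁ t := by
      simpa using ((hasDerivAt_id t).smul_const e₁).const_add (X (Fin.cons 0 y))
    have hφd : HasFDerivAt φ (fderiv ℝ φ (X (Fin.cons 0 y) + t • e₁)) (X (Fin.cons 0 y) + t • e₁) :=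
      (hsm.differentiable (by simp) _).hasFDerivAt
    have := hφd.comp_hasDerivAt t hA
    rw [hψeq y, ← hcons t y] at *
    exact this
  have hψderiv : ∀ y t, deriv (ψ y) t = (fderiv ℝ φ (X (Fin.cons t y))) e₁ := fun y t =>
    (hψd y t).deriv
  have hψz : ∀ y t, r₀ ≤ |t| → ψ y t = 0 := by
    intro y t ht
    apply hφ0
    intro hmem
    rw [mem_ball_zero_iff] at hmem
    have := hx0 (X (Fin.cons t y))
    rw [hconszero t y] at this
    linarith
  have hderiv_le : ∀ y t, (deriv (ψ y) t) ^ 2 ≤ ‖gradient φ (X (Fin.cons t y))‖ ^ 2 := by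
    intro y t
    rw [hψderiv y t]
    set x := X (Fin.cons t y)
    have hfg : (fderiv ℝ φ x) e₁ = ⟪gradient φ x, e₁⟫ := by
      rw [gradient, ← InnerProductSpace.toDual_apply_apply]; simp
    rw [hfg]
    have h := abs_real_inner_le_norm (gradient φ x) e₁
    rw [he₁, EuclideanSpace.norm_single] at h
    simp only [norm_one, mul_one] at h
    calc ⟪gradient φ x, e₁⟫ ^ 2 = |⟪gradient φ x, e₁⟫| ^ 2 := (sq_abs _).symm
      _ ≤ ‖gradient φ x‖ ^ 2 := by
          apply pow_le_pow_left₀ (abs_nonneg _)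
          rw [he₁]; exact h
  -- slice inequality at the lintegral level
  have hslice : ∀ y : Fin m → ℝ,
      ∫⁻ t, ENNReal.ofReal (F (X (Fin.cons t y)))
        ≤ ENNReal.ofReal c * ∫⁻ t, ENNReal.ofReal (G (X (Fin.cons t y))) := by
    intro y
    obtain ⟨hI1, hI2, hle⟩ := hardy_line β hβ (ψ y) (hψsm y) r₀ hr (hψz y)
    have hFx : ∀ t, F (X (Fin.cons t y)) = |t| ^ (β - 2) * ψ y t ^ 2 := by
      intro t; rw [hF]; simp only; rw [hconszero t y]
    have hGx : ∀ t, G (X (Fin.cons t y)) = |t| ^ β * ‖gradient φ (X (Fin.cons t y))‖ ^ 2 := by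
      intro t; rw [hG]; simp only; rw [hconszero t y]
    calc ∫⁻ t, ENNReal.ofReal (F (X (Fin.cons t y)))
        = ∫⁻ t, ENNReal.ofReal (|t| ^ (β - 2) * ψ y t ^ 2) :=
          lintegral_congr fun t => by rw [hFx t]
      _ = ENNReal.ofReal (∫ t, |t| ^ (β - 2) * ψ y t ^ 2) := by
          rw [MeasureTheory.ofReal_integral_eq_lintegral_ofReal hI1]
          filter_upwards with t
          exact mul_nonneg (Real.rpow_nonneg (abs_nonneg _) _) (sq_nonneg _)
      _ ≤ ENNReal.ofReal (c * ∫ t, |t| ^ β * (deriv (ψ y) t) ^ 2) := ENNReal.ofReal_le_ofReal hle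
      _ = ENNReal.ofReal c * ENNReal.ofReal (∫ t, |t| ^ β * (deriv (ψ y) t) ^ 2) :=
          ENNReal.ofReal_mul hc0
      _ = ENNReal.ofReal c * ∫⁻ t, ENNReal.ofReal (|t| ^ β * (deriv (ψ y) t) ^ 2) := by
          rw [MeasureTheory.ofReal_integral_eq_lintegral_ofReal hI2]
          filter_upwards with t
          exact mul_nonneg (Real.rpow_nonneg (abs_nonneg _) _) (sq_nonneg _)
      _ ≤ ENNReal.ofReal c * ∫⁻ t, ENNReal.ofReal (G (X (Fin.cons t y))) := by
          apply mul_le_mul_right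
          apply lintegral_mono
          intro t
          apply ENNReal.ofReal_le_ofReal
          rw [hGx t]
          exact mul_le_mul_of_nonneg_left (hderiv_le y t)
            (Real.rpow_nonneg (abs_nonneg _) _)
  -- Fubini reduction
  have hEP : MeasurePreserving (MeasurableEquiv.toLp 2 (Fin (m+1) → ℝ)) :=
    (EuclideanSpace.volume_preserving_symm_measurableEquiv_toLp (Fin (m+1))).symm
  have hPP : MeasurePreserving
      (MeasurableEquiv.piFinSuccAbove (fun _ : Fin (m+1) => ℝ) 0).symm :=
    (volume_preserving_piFinSuccAbove (fun _ : Fin (m+1) => ℝ) 0).symm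
  have hsymm_cons : ∀ p : ℝ × (Fin m → ℝ),
      (MeasurableEquiv.piFinSuccAbove (fun _ : Fin (m+1) => ℝ) 0).symm p
        = Fin.cons p.1 p.2 := by
    intro p
    simp [MeasurableEquiv.piFinSuccAbove, Fin.insertNthEquiv, Fin.insertNth_zero']
  have hfub : ∀ H : Euc (m+1) → ℝ, Measurable H → (∀ x, 0 ≤ H x) →
      ∫⁻ x, ENNReal.ofReal (H x)
        = ∫⁻ y, ∫⁻ t, ENNReal.ofReal (H (X (Fin.cons t y))) := by
    intro H hHm _
    have h1 : Measurable fun x : Euc (m+1) => ENNReal.ofReal (H x) :=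
      ENNReal.measurable_ofReal.comp hHm
    rw [← hEP.lintegral_comp h1]
    have h2 : Measurable fun v : Fin (m+1) → ℝ =>
        ENNReal.ofReal (H ((MeasurableEquiv.toLp 2 (Fin (m+1) → ℝ)) v)) :=
      h1.comp (MeasurableEquiv.toLp 2 (Fin (m+1) → ℝ)).measurable
    rw [← hPP.lintegral_comp h2]
    have h3 : Measurable fun p : ℝ × (Fin m → ℝ) =>
        ENNReal.ofReal (H ((MeasurableEquiv.toLp 2 (Fin (m+1) → ℝ))
          ((MeasurableEquiv.piFinSuccAbove (fun _ : Fin (m+1) => ℝ) 0).symm p))) :=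
      h2.comp (MeasurableEquiv.piFinSuccAbove (fun _ : Fin (m+1) => ℝ) 0).symm.measurable
    rw [Measure.volume_eq_prod, lintegral_prod_symm _ h3.aemeasurable]
    congr 1
    funext y
    congr 1
    funext t
    rw [hsymm_cons (t, y)]
    rfl
  -- main lintegral inequality
  have hmain : ∫⁻ x, ENNReal.ofReal (F x)
      ≤ ENNReal.ofReal c * ∫⁻ x, ENNReal.ofReal (G x) := by
    rw [hfub F hFm hFnn, hfub G hGm hGnn]
    calc ∫⁻ y, ∫⁻ t, ENNReal.ofReal (F (X (Fin.cons t y)))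
        ≤ ∫⁻ y, ENNReal.ofReal c * ∫⁻ t, ENNReal.ofReal (G (X (Fin.cons t y))) :=
          lintegral_mono fun y => hslice y
      _ = ENNReal.ofReal c * ∫⁻ y, ∫⁻ t, ENNReal.ofReal (G (X (Fin.cons t y))) :=
          lintegral_const_mul' _ _ ENNReal.ofReal_ne_top
  -- finiteness of the right-hand side
  have hGlt : ∫⁻ x, ENNReal.ofReal (G x) ≠ ⊤ := by
    rw [← MeasureTheory.ofReal_integral_eq_lintegral_ofReal hGint
      (Filter.Eventually.of_forall hGnn)]
    exact ENNReal.ofReal_ne_top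
  -- convert to Bochner integrals
  have hFball : ∫ x in ball (0:Euc (m+1)) r₀, F x = ∫ x, F x :=
    setIntegral_eq_integral_of_forall_compl_eq_zero hF0
  have hGball : ∫ x in ball (0:Euc (m+1)) r₀, G x = ∫ x, G x :=
    setIntegral_eq_integral_of_forall_compl_eq_zero hG0
  have hFint_eq : ∫ x, F x = (∫⁻ x, ENNReal.ofReal (F x)).toReal :=
    integral_eq_lintegral_of_nonneg_ae (Filter.Eventually.of_forall hFnn)
      hFm.aestronglyMeasurable
  have hGint_eq : ∫ x, G x = (∫⁻ x, ENNReal.ofReal (G x)).toReal :=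
    integral_eq_lintegral_of_nonneg_ae (Filter.Eventually.of_forall hGnn)
      hGm.aestronglyMeasurable
  have htop : ENNReal.ofReal c * ∫⁻ x, ENNReal.ofReal (G x) ≠ ⊤ :=
    ENNReal.mul_ne_top ENNReal.ofReal_ne_top hGlt
  have hfinal : ∫ x in ball (0 : Euc (m+1)) r₀, F x
      ≤ c * ∫ x in ball (0 : Euc (m+1)) r₀, G x := by
    rw [hFball, hGball, hFint_eq, hGint_eq]
    calc (∫⁻ x, ENNReal.ofReal (F x)).toReal
        ≤ (ENNReal.ofReal c * ∫⁻ x, ENNReal.ofReal (G x)).toReal :=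
          ENNReal.toReal_mono htop hmain
      _ = c * (∫⁻ x, ENNReal.ofReal (G x)).toReal := by
          rw [ENNReal.toReal_mul, ENNReal.toReal_ofReal hc0]
  exact hfinal

end HardyHelpers

/-- **Lemma (n-dimensional weighted Hardy inequality in the `x₁` variable).**
Let `n ≥ 1`, `r₀ > 0`, `β > 1` and `φ ∈ C_c^∞(B_{r₀})` with `B_{r₀} ⊂ ℝⁿ`.  Then
`∫_{B_{r₀}} |x₁|^{β-2} φ(x)² dx ≤ (2/(β-1))² ∫_{B_{r₀}} |x₁|^{β} |∇φ(x)|² dx`. -/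
theorem stmt_12 (n : ℕ) (hn : 1 ≤ n) (r₀ β : ℝ) (hr : 0 < r₀) (hβ : 1 < β)
    (φ : Euc n → ℝ) (hφ : IsTestFun (ball (0 : Euc n) r₀) φ) :
    ∫ x in ball (0 : Euc n) r₀, |x ⟨0, by omega⟩| ^ (β - 2) * φ x ^ 2 ≤
      (2 / (β - 1)) ^ 2 *
        ∫ x in ball (0 : Euc n) r₀, |x ⟨0, by omega⟩| ^ β * ‖gradient φ x‖ ^ 2 := by
  obtain ⟨hsm, hcs, hsupp⟩ := hφ
  exact hardy_main n hn r₀ β hr hβ φ hsm hcs hsupp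
end
end

section
/- Let n ≥ 2, a ∈ (1/2, 1), and u(x) = |x₁|^{1−a} on the unit ball B₁ ⊂ ℝⁿ, so that |∇u(x)| = (1−a)|x₁|^{−a} for x₁ ≠ 0. Then ∇u belongs to the Morrey space M^{n/a}(B₁), but for every b > 0, ∇u does not belong to M^{n/a + b}(B₁). -/
open MeasureTheory Metric Real Filter Asymptotics Bornology
open scoped RealInnerProductSpace Topology

noncomputable section

private lemma derivAbsRpow {a : ℝ} (ha0 : 0 < a) (ha1 : a < 1) {t : ℝ} (ht : t ≠ 0) :
    ∃ d : ℝ, HasDerivAt (fun s : ℝ => |s| ^ (1 - a)) d t ∧ |d| = (1 - a) * |t| ^ (-a) := by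
  rcases ht.lt_or_gt with h | h
  · refine ⟨(1 - a) * (-t) ^ (-a) * -1, ?_, ?_⟩
    · have h1 : HasDerivAt (fun s : ℝ => -s) (-1) t := hasDerivAt_neg t
      have h2 : HasDerivAt (fun s : ℝ => (-s) ^ (1 - a))
          ((1 - a) * (-t) ^ (1 - a - 1) * -1) t :=
        (Real.hasDerivAt_rpow_const (p := 1 - a)
          (Or.inl (by simp only [ne_eq, neg_eq_zero]; exact ht))).comp t h1
      rw [show (1:ℝ) - a - 1 = -a from by ring] at h2
      refine h2.congr_of_eventuallyEq ?_
      filter_upwards [isOpen_Iio.mem_nhds h] with s hs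
      rw [abs_of_neg hs]
    · have h2 : (0:ℝ) < -t := by linarith
      rw [abs_of_neg h, abs_mul, abs_mul, abs_neg, abs_one, mul_one,
        abs_of_nonneg (by linarith : (0:ℝ) ≤ 1 - a),
        abs_of_nonneg (Real.rpow_nonneg h2.le _)]
  · refine ⟨(1 - a) * t ^ (-a), ?_, ?_⟩
    · have h2 : HasDerivAt (fun s : ℝ => s ^ (1 - a)) ((1 - a) * t ^ (1 - a - 1)) t :=
        Real.hasDerivAt_rpow_const (Or.inl ht)
      rw [show (1:ℝ) - a - 1 = -a from by ring] at h2
      refine h2.congr_of_eventuallyEq ?_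
      filter_upwards [isOpen_Ioi.mem_nhds h] with s hs
      rw [abs_of_pos hs]
    · rw [abs_of_pos h, abs_mul, abs_of_nonneg (by linarith : (0:ℝ) ≤ 1 - a),
        abs_of_nonneg (Real.rpow_nonneg h.le _)]

private lemma H_int_Ioo {a : ℝ} (ha0 : 0 < a) (ha1 : a < 1) (l r : ℝ) :
    IntegrableOn (fun t : ℝ => |t| ^ (-a)) (Set.Ioo l r) := by
  set R : ℝ := max (max |l| |r|) 1 with hR
  have hR1 : (0:ℝ) < R := lt_of_lt_of_le one_pos (le_max_right _ _)
  have hpos : IntegrableOn (fun t : ℝ => |t| ^ (-a)) (Set.Ioo 0 R) := by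
    refine ((intervalIntegral.integrableOn_Ioo_rpow_iff (s := -a) hR1).2 (by linarith)).congr_fun ?_ measurableSet_Ioo
    intro x hx
    simp only []
    rw [abs_of_pos hx.1]
  have hneg : IntegrableOn (fun t : ℝ => |t| ^ (-a)) (Set.Ioo (-R) 0) := by
    have hpre : (fun x : ℝ => -x) ⁻¹' Set.Ioo (-R) 0 = Set.Ioo 0 R := by
      ext x
      simp only [Set.mem_preimage, Set.mem_Ioo]
      constructor <;> intro hx <;> constructor <;> linarith [hx.1, hx.2]
    have := (Measure.measurePreserving_neg (volume : Measure ℝ)).integrableOn_comp_preimage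
      (Homeomorph.neg ℝ).measurableEmbedding
      (f := fun t : ℝ => |t| ^ (-a)) (s := Set.Ioo (-R) 0)
    rw [← this]
    have : ((fun t : ℝ => |t| ^ (-a)) ∘ fun x : ℝ => -x) = fun t : ℝ => |t| ^ (-a) := by
      funext s; simp [Function.comp, abs_neg]
    rw [show (Neg.neg ⁻¹' Set.Ioo (-R) (0:ℝ)) = Set.Ioo 0 R from hpre, this]
    exact hpos
  have hunion : IntegrableOn (fun t : ℝ => |t| ^ (-a)) (Set.Ioc (-R) 0 ∪ Set.Ioo 0 R) :=
    ((integrableOn_Ioc_iff_integrableOn_Ioo).2 hneg).union hpos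
  rw [Set.Ioc_union_Ioo_eq_Ioo (by linarith) hR1] at hunion
  refine hunion.mono_set ?_
  intro x hx
  have h1 : -R ≤ -|l| := by simp only [neg_le_neg_iff]; exact (le_max_left _ _).trans' (le_max_left _ _)
  have h2 : |r| ≤ R := (le_max_right |l| |r|).trans (le_max_left _ _)
  exact ⟨lt_of_le_of_lt (h1.trans (neg_abs_le l)) hx.1, hx.2.trans_le ((le_abs_self r).trans h2)⟩


private lemma H_val_pos {a : ℝ} (ha1 : a < 1) {R : ℝ} (hR : 0 < R) :
    ∫ t in Set.Ioo (0:ℝ) R, |t| ^ (-a) = R ^ (1 - a) / (1 - a) := by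
  have hcong : ∫ t in Set.Ioo (0:ℝ) R, |t| ^ (-a) = ∫ t in Set.Ioo (0:ℝ) R, t ^ (-a) := by
    refine setIntegral_congr_fun measurableSet_Ioo ?_
    intro x hx
    simp only []
    rw [abs_of_pos hx.1]
  rw [hcong, ← MeasureTheory.integral_Ioc_eq_integral_Ioo,
    ← intervalIntegral.integral_of_le hR.le,
    integral_rpow (Or.inl (by linarith : (-1:ℝ) < -a))]
  rw [Real.zero_rpow (by intro hz; linarith : -a + 1 ≠ 0)]
  rw [show -a + 1 = 1 - a from by ring]
  ring

private lemma H_val_neg {a : ℝ} {R : ℝ} :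
    ∫ t in Set.Ioo (-R) (0:ℝ), |t| ^ (-a) = ∫ t in Set.Ioo (0:ℝ) R, |t| ^ (-a) := by
  have hpre : (fun x : ℝ => -x) ⁻¹' Set.Ioo (-R) 0 = Set.Ioo 0 R := by
    ext x
    simp only [Set.mem_preimage, Set.mem_Ioo]
    constructor <;> intro hx <;> constructor <;> linarith [hx.1, hx.2]
  have h := (Measure.measurePreserving_neg (volume : Measure ℝ)).setIntegral_preimage_emb
    (Homeomorph.neg ℝ).measurableEmbedding (fun t : ℝ => |t| ^ (-a)) (Set.Ioo (-R) 0)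
  rw [show (Neg.neg ⁻¹' Set.Ioo (-R) (0:ℝ)) = Set.Ioo 0 R from hpre] at h
  rw [← h]
  refine setIntegral_congr_fun measurableSet_Ioo ?_
  intro x _
  simp [abs_neg]


private lemma H_val_symm {a : ℝ} (ha0 : 0 < a) (ha1 : a < 1) {R : ℝ} (hR : 0 < R) :
    ∫ t in Set.Ioo (-R) R, |t| ^ (-a) = 2 / (1 - a) * R ^ (1 - a) := by
  have hneg : IntegrableOn (fun t : ℝ => |t| ^ (-a)) (Set.Ioc (-R) 0) :=
    (integrableOn_Ioc_iff_integrableOn_Ioo).2 ((H_int_Ioo ha0 ha1 _ _))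
  have hpos : IntegrableOn (fun t : ℝ => |t| ^ (-a)) (Set.Ioo 0 R) := H_int_Ioo ha0 ha1 _ _
  have hdisj : Disjoint (Set.Ioc (-R) (0:ℝ)) (Set.Ioo (0:ℝ) R) := by
    apply Set.disjoint_left.2
    intro x hx hx'
    exact absurd hx.2 (not_le.2 hx'.1)
  have := setIntegral_union hdisj measurableSet_Ioo hneg hpos (f := fun t : ℝ => |t| ^ (-a))
    (μ := volume)
  rw [Set.Ioc_union_Ioo_eq_Ioo (by linarith) hR] at this
  rw [this, MeasureTheory.integral_Ioc_eq_integral_Ioo, H_val_neg, H_val_pos ha1 hR]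
  ring

private lemma H_bound {a : ℝ} (ha0 : 0 < a) (ha1 : a < 1) (c : ℝ) {ρ : ℝ} (hρ : 0 < ρ) :
    ∫ t in Set.Ioo (c - ρ) (c + ρ), |t| ^ (-a) ≤ (2 / (1 - a) + 2) * ρ ^ (1 - a) := by
  have hnn : ∀ t : ℝ, 0 ≤ |t| ^ (-a) := fun t => Real.rpow_nonneg (abs_nonneg t) _
  have hintS : IntegrableOn (fun t : ℝ => |t| ^ (-a)) (Set.Ioo (c - ρ) (c + ρ)) :=
    H_int_Ioo ha0 ha1 _ _
  have hintT : IntegrableOn (fun t : ℝ => |t| ^ (-a)) (Set.Ioo (-ρ) ρ) := H_int_Ioo ha0 ha1 _ _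
  have hsplit := integral_inter_add_diff (μ := volume) (s := Set.Ioo (c - ρ) (c + ρ))
    (t := Set.Ioo (-ρ) ρ) (f := fun t : ℝ => |t| ^ (-a)) measurableSet_Ioo hintS
  have h1 : ∫ t in Set.Ioo (c - ρ) (c + ρ) ∩ Set.Ioo (-ρ) ρ, |t| ^ (-a)
      ≤ 2 / (1 - a) * ρ ^ (1 - a) := by
    rw [← H_val_symm ha0 ha1 hρ]
    refine setIntegral_mono_set hintT ?_ (HasSubset.Subset.eventuallyLE Set.inter_subset_right)
    exact Filter.Eventually.of_forall fun t => hnn t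
  have h2 : ∫ t in Set.Ioo (c - ρ) (c + ρ) \ Set.Ioo (-ρ) ρ, |t| ^ (-a) ≤ 2 * ρ ^ (1 - a) := by
    have hmeas : MeasurableSet (Set.Ioo (c - ρ) (c + ρ) \ Set.Ioo (-ρ) ρ) :=
      measurableSet_Ioo.diff measurableSet_Ioo
    have hvol : volume (Set.Ioo (c - ρ) (c + ρ) \ Set.Ioo (-ρ) ρ) ≤ ENNReal.ofReal (2 * ρ) := by
      refine le_trans (measure_mono Set.diff_subset) ?_
      rw [Real.volume_Ioo]
      exact ENNReal.ofReal_le_ofReal (by ring_nf; linarith)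
    have hconst : IntegrableOn (fun _ : ℝ => ρ ^ (-a)) (Set.Ioo (c - ρ) (c + ρ) \ Set.Ioo (-ρ) ρ) := by
      refine integrableOn_const ?_
      exact (lt_of_le_of_lt hvol ENNReal.ofReal_lt_top).ne
    calc ∫ t in Set.Ioo (c - ρ) (c + ρ) \ Set.Ioo (-ρ) ρ, |t| ^ (-a)
        ≤ ∫ _ in Set.Ioo (c - ρ) (c + ρ) \ Set.Ioo (-ρ) ρ, ρ ^ (-a) := by
          refine setIntegral_mono_on (hintS.mono_set Set.diff_subset) hconst hmeas ?_
          intro t ht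
          have hρt : ρ ≤ |t| := by
            by_contra hcon
            push_neg at hcon
            exact ht.2 ⟨(abs_lt.1 hcon).1, (abs_lt.1 hcon).2⟩
          exact Real.rpow_le_rpow_of_nonpos hρ hρt (by linarith)
      _ = (volume (Set.Ioo (c - ρ) (c + ρ) \ Set.Ioo (-ρ) ρ)).toReal * ρ ^ (-a) := by
          rw [setIntegral_const, smul_eq_mul, measureReal_def]
      _ ≤ 2 * ρ * ρ ^ (-a) := by
          refine mul_le_mul_of_nonneg_right ?_ (Real.rpow_nonneg hρ.le _)
          refine ENNReal.toReal_le_of_le_ofReal (by linarith) hvol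
      _ = 2 * ρ ^ (1 - a) := by
          rw [show (1:ℝ) - a = 1 + -a from by ring, Real.rpow_add hρ, Real.rpow_one]
          ring
  linarith [hsplit, h1, h2]


private lemma box_prod {n : ℕ} (hn : 1 ≤ n) (i0 : Fin n) (c : Fin n → ℝ) {ρ : ℝ} (hρ : 0 < ρ)
    {h : ℝ → ℝ} (hint : IntegrableOn h (Set.Ioo (c i0 - ρ) (c i0 + ρ))) :
    IntegrableOn (fun y : Fin n → ℝ => h (y i0))
      (Set.univ.pi fun i => Set.Ioo (c i - ρ) (c i + ρ)) ∧
    ∫ y in Set.univ.pi fun i => Set.Ioo (c i - ρ) (c i + ρ), h (y i0)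
      = (∫ t in Set.Ioo (c i0 - ρ) (c i0 + ρ), h t) * (2 * ρ) ^ (n - 1) := by
  classical
  set I : Fin n → Set ℝ := fun i => Set.Ioo (c i - ρ) (c i + ρ) with hI
  set f : Fin n → ℝ → ℝ := fun i => if i = i0 then (I i0).indicator h else (I i).indicator 1
    with hf
  have key : ∀ y : Fin n → ℝ,
      (Set.univ.pi I).indicator (fun y : Fin n → ℝ => h (y i0)) y = ∏ i, f i (y i) := by
    intro y
    by_cases hy : y ∈ Set.univ.pi I
    · rw [Set.indicator_of_mem hy]
      have hy' : ∀ i, y i ∈ I i := fun i => hy i (Set.mem_univ i)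
      rw [Finset.prod_eq_single i0
        (fun i _ hi => by simp only [hf, if_neg hi]; rw [Set.indicator_of_mem (hy' i)]; rfl)
        (fun hmem => absurd (Finset.mem_univ i0) hmem)]
      simp only [hf, if_pos rfl]
      rw [Set.indicator_of_mem (hy' i0)]
    · rw [Set.indicator_of_notMem hy]
      rw [Set.mem_pi] at hy
      push_neg at hy
      obtain ⟨i, -, hi⟩ := hy
      refine (Finset.prod_eq_zero (Finset.mem_univ i) ?_).symm
      by_cases h' : i = i0
      · subst h'
        simp only [hf, if_pos rfl]
        rw [Set.indicator_of_notMem hi]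
      · simp only [hf, if_neg h']
        rw [Set.indicator_of_notMem hi]
  have hIvol : ∀ i, volume (I i) = ENNReal.ofReal (2 * ρ) := by
    intro i
    rw [hI]
    simp only [Real.volume_Ioo]
    congr 1
    ring
  have hfint : ∀ i, Integrable (f i) := by
    intro i
    by_cases h' : i = i0
    · subst h'
      simp only [hf, if_pos rfl]
      exact (integrable_indicator_iff measurableSet_Ioo).2 hint
    · simp only [hf, if_neg h']
      refine (integrable_indicator_iff measurableSet_Ioo).2 ?_
      refine integrableOn_const ?_
      rw [hIvol i]
      exact ENNReal.ofReal_ne_top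
  have hprod : Integrable (fun y : Fin n → ℝ => ∏ i, f i (y i)) :=
    MeasureTheory.Integrable.fintype_prod hfint
  have hmeas : MeasurableSet (Set.univ.pi I) :=
    MeasurableSet.univ_pi fun i => measurableSet_Ioo
  have hind : Integrable ((Set.univ.pi I).indicator fun y : Fin n → ℝ => h (y i0)) := by
    rw [show ((Set.univ.pi I).indicator fun y : Fin n → ℝ => h (y i0))
      = fun y : Fin n → ℝ => ∏ i, f i (y i) from funext key]
    exact hprod
  have hErase : ∀ i ∈ Finset.univ.erase i0, (∫ t, f i t) = 2 * ρ := by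
    intro i hi
    have hi' : i ≠ i0 := (Finset.mem_erase.1 hi).1
    simp only [hf, if_neg hi']
    rw [show ((I i).indicator (1 : ℝ → ℝ)) = (I i).indicator (fun _ => (1:ℝ)) from rfl,
      MeasureTheory.integral_indicator_const (1:ℝ) measurableSet_Ioo, measureReal_def, hIvol i, smul_eq_mul,
      mul_one, ENNReal.toReal_ofReal (by linarith)]
  constructor
  · exact (integrable_indicator_iff hmeas).1 hind
  · rw [← MeasureTheory.integral_indicator hmeas]
    calc ∫ y : Fin n → ℝ, (Set.univ.pi I).indicator (fun y : Fin n → ℝ => h (y i0)) y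
        = ∫ y : Fin n → ℝ, ∏ i, f i (y i) := by simp_rw [key]
      _ = ∏ i, ∫ t, f i t := MeasureTheory.integral_fintype_prod_eq_prod f
      _ = (∫ t, f i0 t) * ∏ i ∈ Finset.univ.erase i0, ∫ t, f i t :=
          (Finset.mul_prod_erase _ _ (Finset.mem_univ i0)).symm
      _ = (∫ t in Set.Ioo (c i0 - ρ) (c i0 + ρ), h t) * (2 * ρ) ^ (n - 1) := by
          rw [Finset.prod_congr rfl hErase, Finset.prod_const,
            Finset.card_erase_of_mem (Finset.mem_univ i0), Finset.card_univ, Fintype.card_fin]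
          congr 1
          simp only [hf, if_pos rfl]
          rw [MeasureTheory.integral_indicator measurableSet_Ioo]


private lemma euc_box {n : ℕ} (hn : 1 ≤ n) (i0 : Fin n) (x₀ : EuclideanSpace ℝ (Fin n))
    {ρ : ℝ} (hρ : 0 < ρ) {h : ℝ → ℝ}
    (hint : IntegrableOn h (Set.Ioo (x₀ i0 - ρ) (x₀ i0 + ρ))) :
    IntegrableOn (fun x : EuclideanSpace ℝ (Fin n) => h (x i0))
      {x : EuclideanSpace ℝ (Fin n) | ∀ i, x i ∈ Set.Ioo (x₀ i - ρ) (x₀ i + ρ)} ∧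
    ∫ x in {x : EuclideanSpace ℝ (Fin n) | ∀ i, x i ∈ Set.Ioo (x₀ i - ρ) (x₀ i + ρ)}, h (x i0)
      = (∫ t in Set.Ioo (x₀ i0 - ρ) (x₀ i0 + ρ), h t) * (2 * ρ) ^ (n - 1) := by
  set e := (MeasurableEquiv.toLp 2 (Fin n → ℝ)).symm with he
  have hmp : MeasurePreserving e volume volume :=
    EuclideanSpace.volume_preserving_symm_measurableEquiv_toLp (Fin n)
  have hemb : MeasurableEmbedding e := e.measurableEmbedding
  set c : Fin n → ℝ := fun i => x₀ i with hc
  have hbp := box_prod hn i0 c hρ (h := h) hint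
  have hpre : ⇑e ⁻¹' (Set.univ.pi fun i => Set.Ioo (c i - ρ) (c i + ρ))
      = {x : EuclideanSpace ℝ (Fin n) | ∀ i, x i ∈ Set.Ioo (x₀ i - ρ) (x₀ i + ρ)} := by
    ext x
    constructor
    · intro hx i
      exact hx i trivial
    · intro hx i _
      exact hx i
  constructor
  · have h2 : IntegrableOn ((fun y : Fin n → ℝ => h (y i0)) ∘ ⇑e)
        (⇑e ⁻¹' (Set.univ.pi fun i => Set.Ioo (c i - ρ) (c i + ρ))) volume :=
      (hmp.integrableOn_comp_preimage hemb).2 hbp.1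
    rw [hpre] at h2
    exact h2
  · have h2 := hmp.setIntegral_preimage_emb hemb
      (fun y : Fin n → ℝ => h (y i0)) (Set.univ.pi fun i => Set.Ioo (c i - ρ) (c i + ρ))
    rw [hpre] at h2
    rw [show (fun x : EuclideanSpace ℝ (Fin n) => h (x i0))
      = fun x : EuclideanSpace ℝ (Fin n) => h ((e x) i0) from rfl]
    rw [h2, hbp.2]


private lemma grad_norm {n : ℕ} {a : ℝ} (ha0 : 0 < a) (ha1 : a < 1) (i0 : Fin n)
    {x : EuclideanSpace ℝ (Fin n)} (hx : x i0 ≠ 0) :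
    ‖gradient (fun z : EuclideanSpace ℝ (Fin n) => |z i0| ^ (1 - a)) x‖
      = (1 - a) * |x i0| ^ (-a) := by
  obtain ⟨d, hd, habs⟩ := derivAbsRpow ha0 ha1 hx
  have hproj : HasFDerivAt (fun z : EuclideanSpace ℝ (Fin n) => z i0)
      (EuclideanSpace.proj i0 : EuclideanSpace ℝ (Fin n) →L[ℝ] ℝ) x :=
    (EuclideanSpace.proj (𝕜 := ℝ) i0).hasFDerivAt
  have hcomp : HasFDerivAt (fun z : EuclideanSpace ℝ (Fin n) => |z i0| ^ (1 - a))
      (d • (EuclideanSpace.proj i0 : EuclideanSpace ℝ (Fin n) →L[ℝ] ℝ)) x :=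
    by have := hd.comp_hasFDerivAt x hproj; exact this
  have hdual : (InnerProductSpace.toDual ℝ (EuclideanSpace ℝ (Fin n)))
      (d • EuclideanSpace.single i0 (1:ℝ))
      = d • (EuclideanSpace.proj i0 : EuclideanSpace ℝ (Fin n) →L[ℝ] ℝ) := by
    ext y
    simp [InnerProductSpace.toDual_apply_apply, real_inner_smul_left,
      EuclideanSpace.inner_single_left]
  have hgrad : HasGradientAt (fun z : EuclideanSpace ℝ (Fin n) => |z i0| ^ (1 - a))
      (d • EuclideanSpace.single i0 (1:ℝ)) x := by
    rw [hasGradientAt_iff_hasFDerivAt, hdual]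
    exact hcomp
  rw [hgrad.gradient, norm_smul, EuclideanSpace.norm_single]
  simpa using habs

/-- **Morrey (non-)membership of the gradient of `u = |x₁|^{1-a}`.**
Let `n ≥ 2`, `a ∈ (1/2,1)` and `u(x) = |x₁|^{1-a}` on `B₁ ⊂ ℝⁿ` (so that
`|∇u(x)| = (1-a)|x₁|^{-a}` for `x₁ ≠ 0`).  Then `∇u ∈ M^{n/a}(B₁)` but
`∇u ∉ M^{n/a+b}(B₁)` for every `b > 0`. -/
theorem stmt_16 (n : ℕ) (hn : 2 ≤ n) (a : ℝ) (ha : a ∈ Set.Ioo (1/2 : ℝ) 1)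
    (u : Euc n → ℝ) (hu : ∀ x : Euc n, u x = |x ⟨0, by omega⟩| ^ (1 - a)) :
    MemMorrey (ball (0 : Euc n) 1) ((n : ℝ) / a) (fun x => gradient u x) ∧
    ∀ b : ℝ, 0 < b →
      ¬ MemMorrey (ball (0 : Euc n) 1) ((n : ℝ) / a + b) (fun x => gradient u x) := by
  classical
  have ha0 : 0 < a := lt_trans one_half_pos ha.1
  have ha1 : a < 1 := ha.2
  have h1a : (0:ℝ) < 1 - a := by linarith
  have hn1 : 1 ≤ n := by omega
  have hna : ((n:ℝ)) ≠ 0 := Nat.cast_ne_zero.2 (by omega)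
  have hnpos : (0:ℝ) < (n:ℝ) := by positivity
  set i0 : Fin n := ⟨0, by omega⟩ with hi0
  have hu' : u = fun x : Euc n => |x i0| ^ (1 - a) := funext hu
  subst hu'
  -- the set where the gradient formula may fail is null
  have hnull : volume {x : Euc n | x i0 = 0} = 0 := by
    have hker : {x : Euc n | x i0 = 0}
        = (LinearMap.ker (EuclideanSpace.projₗ (𝕜 := ℝ) i0) : Submodule ℝ (Euc n)) := by
      ext x
      constructor
      · intro h
        exact h
      · intro h
        exact h
    rw [hker]
    refine Measure.addHaar_submodule _ _ ?_
    intro htop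
    have hmem : EuclideanSpace.single i0 (1:ℝ)
        ∈ LinearMap.ker (EuclideanSpace.projₗ (𝕜 := ℝ) i0) := htop ▸ Submodule.mem_top
    rw [LinearMap.mem_ker] at hmem
    have : (1:ℝ) = 0 := by simpa using hmem
    norm_num at this
  have hne0 : ∀ᵐ x : Euc n ∂volume, x i0 ≠ 0 := by
    rw [ae_iff]
    simpa using hnull
  have hae : ∀ᵐ x : Euc n ∂volume,
      ‖gradient (fun z : Euc n => |z i0| ^ (1 - a)) x‖ = (1 - a) * |x i0| ^ (-a) := by
    filter_upwards [hne0] with x hx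
    exact grad_norm ha0 ha1 i0 hx
  have hcoord : ∀ (x y : Euc n) (i : Fin n), |x i - y i| ≤ dist x y := by
    intro x y i
    rw [EuclideanSpace.dist_eq]
    rw [show |x i - y i| = Real.sqrt ((x i - y i) ^ 2) from (Real.sqrt_sq_eq_abs _).symm]
    apply Real.sqrt_le_sqrt
    have h2 : dist (x i) (y i) ^ 2 = (x i - y i) ^ 2 := by rw [Real.dist_eq, sq_abs]
    rw [← h2]
    exact Finset.single_le_sum (f := fun j => dist (x j) (y j) ^ 2)
      (fun j _ => sq_nonneg _) (Finset.mem_univ i)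
  have hball_sub : ∀ (x₀ : Euc n) (ρ : ℝ), ball x₀ ρ ⊆
      {x : Euc n | ∀ i, x i ∈ Set.Ioo (x₀ i - ρ) (x₀ i + ρ)} := by
    intro x₀ ρ x hx i
    have := (hcoord x x₀ i).trans_lt (mem_ball.1 hx)
    have h2 := abs_lt.1 this
    exact ⟨by linarith [h2.1], by linarith [h2.2]⟩
  have hint : ∀ (c ρ : ℝ), IntegrableOn (fun t : ℝ => (1 - a) * |t| ^ (-a))
      (Set.Ioo (c - ρ) (c + ρ)) := fun c ρ => (H_int_Ioo ha0 ha1 _ _).const_mul (1 - a)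
  have hGnn : ∀ x : Euc n, 0 ≤ (1 - a) * |x i0| ^ (-a) :=
    fun x => mul_nonneg h1a.le (Real.rpow_nonneg (abs_nonneg _) _)
  -- the main upper bound, valid for every center and radius
  have hupper : ∀ (x₀ : Euc n) (ρ : ℝ), 0 < ρ →
      ∫ x in ball x₀ ρ ∩ ball (0 : Euc n) 1,
          ‖gradient (fun z : Euc n => |z i0| ^ (1 - a)) x‖
        ≤ ((1 - a) * (2 / (1 - a) + 2) * 2 ^ (n - 1)) * ρ ^ ((n:ℝ) - a) := by
    intro x₀ ρ hρ
    have hbox := euc_box hn1 i0 x₀ hρ (h := fun t : ℝ => (1 - a) * |t| ^ (-a)) (hint _ _)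
    have hsub : ball x₀ ρ ∩ ball (0 : Euc n) 1 ⊆
        {x : Euc n | ∀ i, x i ∈ Set.Ioo (x₀ i - ρ) (x₀ i + ρ)} :=
      Set.inter_subset_left.trans (hball_sub x₀ ρ)
    have harith : ((1 - a) * ((2 / (1 - a) + 2) * ρ ^ (1 - a))) * (2 * ρ) ^ (n - 1)
        = ((1 - a) * (2 / (1 - a) + 2) * 2 ^ (n - 1)) * ρ ^ ((n:ℝ) - a) := by
      rw [mul_pow, ← Real.rpow_natCast ρ (n - 1), Nat.cast_sub hn1, Nat.cast_one,
        show ((1 - a) * ((2 / (1 - a) + 2) * ρ ^ (1 - a)))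
            * ((2:ℝ) ^ (n - 1) * ρ ^ ((n:ℝ) - 1))
          = ((1 - a) * (2 / (1 - a) + 2) * 2 ^ (n - 1)) * (ρ ^ (1 - a) * ρ ^ ((n:ℝ) - 1))
          from by ring,
        ← Real.rpow_add hρ, show (1 - a) + ((n:ℝ) - 1) = (n:ℝ) - a from by ring]
    calc ∫ x in ball x₀ ρ ∩ ball (0 : Euc n) 1,
            ‖gradient (fun z : Euc n => |z i0| ^ (1 - a)) x‖
        ≤ ∫ x in ball x₀ ρ ∩ ball (0 : Euc n) 1, (1 - a) * |x i0| ^ (-a) := by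
          refine integral_mono_of_nonneg
            (Filter.Eventually.of_forall fun x => norm_nonneg _)
            (hbox.1.mono_set hsub) ?_
          exact ae_restrict_of_ae (hae.mono fun x hx => le_of_eq hx)
      _ ≤ ∫ x in {x : Euc n | ∀ i, x i ∈ Set.Ioo (x₀ i - ρ) (x₀ i + ρ)},
            (1 - a) * |x i0| ^ (-a) := by
          refine setIntegral_mono_set hbox.1
            (Filter.Eventually.of_forall fun x => hGnn x) hsub.eventuallyLE
      _ = (∫ t in Set.Ioo (x₀ i0 - ρ) (x₀ i0 + ρ), (1 - a) * |t| ^ (-a)) * (2 * ρ) ^ (n - 1) :=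
          hbox.2
      _ ≤ ((1 - a) * ((2 / (1 - a) + 2) * ρ ^ (1 - a))) * (2 * ρ) ^ (n - 1) := by
          refine mul_le_mul_of_nonneg_right ?_ (pow_nonneg (by linarith) _)
          rw [MeasureTheory.integral_const_mul]
          exact mul_le_mul_of_nonneg_left (H_bound ha0 ha1 _ hρ) h1a.le
      _ = ((1 - a) * (2 / (1 - a) + 2) * 2 ^ (n - 1)) * ρ ^ ((n:ℝ) - a) := harith
  have hexp : (n:ℝ) * (1 - 1 / ((n:ℝ) / a)) = (n:ℝ) - a := by
    rw [one_div_div]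
    field_simp
  constructor
  · refine ⟨(1 - a) * (2 / (1 - a) + 2) * 2 ^ (n - 1), ?_, ?_⟩
    · exact mul_pos (mul_pos h1a (by positivity)) (by positivity)
    · intro x₀ _ ρ hρ _
      rw [hexp]
      exact hupper x₀ ρ hρ
  · intro b hb
    rintro ⟨K, hK, hM⟩
    -- setup
    haveI : Nontrivial (Euc n) := by
      refine ⟨0, EuclideanSpace.single i0 (1:ℝ), fun h => ?_⟩
      have h0 : ‖EuclideanSpace.single i0 (1:ℝ)‖ = 1 := by
        rw [EuclideanSpace.norm_single]; norm_num
      rw [← h] at h0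
      simp at h0
    set c : ℝ := (volume (ball (0 : Euc n) 1)).toReal with hc
    have hcpos : 0 < c := by
      refine ENNReal.toReal_pos ?_ ?_
      · exact (measure_ball_pos volume 0 one_pos).ne'
      · exact measure_ball_lt_top.ne
    -- the exponent in the assumed Morrey bound
    set p : ℝ := (n:ℝ) / a + b with hp
    have hppos : 0 < p := by positivity
    set q : ℝ := (n:ℝ) * (1 - 1 / p) with hq
    have hq' : q = (n:ℝ) - (n:ℝ) / p := by
      rw [hq, mul_sub, mul_one, mul_one_div]
    have hδpos : 0 < q - ((n:ℝ) - a) := by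
      rw [hq']
      have hap : a * p = (n:ℝ) + a * b := by
        rw [hp]; field_simp
      have : (n:ℝ) / p < a := by
        rw [div_lt_iff₀ hppos, hap]
        nlinarith [mul_pos ha0 hb]
      linarith
    set δ : ℝ := q - ((n:ℝ) - a) with hδ
    set ε : ℝ := (1 - a) * c / K with hε
    have hεpos : 0 < ε := by positivity
    set ρ : ℝ := min 1 (ε ^ (1 / δ)) / 2 with hρdef
    have hminpos : 0 < min 1 (ε ^ (1 / δ)) :=
      lt_min one_pos (Real.rpow_pos_of_pos hεpos _)
    have hρ0 : 0 < ρ := by positivity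
    have hρ1 : ρ ≤ 1 := by
      rw [hρdef]
      have := min_le_left 1 (ε ^ (1 / δ))
      linarith
    have hρδ : ρ ^ δ < ε := by
      have hlt : ρ < ε ^ (1 / δ) := by
        rw [hρdef]
        have h2 := min_le_right 1 (ε ^ (1 / δ))
        linarith [hminpos]
      have := Real.rpow_lt_rpow hρ0.le hlt hδpos
      rwa [← Real.rpow_mul hεpos.le, one_div_mul_cancel hδpos.ne', Real.rpow_one] at this
    -- diameter of the unit ball is at least 1
    have hdiam : ρ ≤ diam (ball (0 : Euc n) 1) := by
      refine hρ1.trans ?_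
      have hmem1 : EuclideanSpace.single i0 (1/2 : ℝ) ∈ ball (0 : Euc n) 1 := by
        rw [mem_ball, dist_zero_right, EuclideanSpace.norm_single]
        rw [show ‖(1/2 : ℝ)‖ = 1/2 from by rw [Real.norm_eq_abs]; norm_num]
        norm_num
      have hmem2 : -EuclideanSpace.single i0 (1/2 : ℝ) ∈ ball (0 : Euc n) 1 := by
        rw [mem_ball, dist_zero_right, norm_neg, EuclideanSpace.norm_single]
        rw [show ‖(1/2 : ℝ)‖ = 1/2 from by rw [Real.norm_eq_abs]; norm_num]
        norm_num
      have hdist : dist (EuclideanSpace.single i0 (1/2 : ℝ))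
          (-EuclideanSpace.single i0 (1/2 : ℝ)) = 1 := by
        rw [dist_eq_norm, sub_neg_eq_add, ← two_smul ℝ, norm_smul,
          EuclideanSpace.norm_single]
        simp [Real.norm_eq_abs]
      calc (1:ℝ) = dist (EuclideanSpace.single i0 (1/2 : ℝ))
            (-EuclideanSpace.single i0 (1/2 : ℝ)) := hdist.symm
        _ ≤ diam (ball (0 : Euc n) 1) :=
            dist_le_diam_of_mem isBounded_ball hmem1 hmem2
    have h0mem : (0 : Euc n) ∈ ball (0 : Euc n) 1 := mem_ball_self one_pos
    have hMb := hM 0 h0mem ρ hρ0 hdiam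
    -- lower bound for the integral
    have hsubB : ball (0 : Euc n) ρ ⊆ ball (0 : Euc n) 1 := ball_subset_ball (by linarith)
    have hinter : ball (0 : Euc n) ρ ∩ ball (0 : Euc n) 1 = ball (0 : Euc n) ρ :=
      Set.inter_eq_left.2 hsubB
    have hbox := euc_box hn1 i0 0 hρ0 (h := fun t : ℝ => (1 - a) * |t| ^ (-a)) (hint _ _)
    have hGball : IntegrableOn (fun x : Euc n => (1 - a) * |x i0| ^ (-a))
        (ball (0 : Euc n) ρ) := by
      refine hbox.1.mono_set ?_
      have := hball_sub 0 ρ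
      intro x hx
      have h2 := this hx
      intro i
      simpa using h2 i
    have hIg : IntegrableOn (fun x : Euc n =>
        ‖gradient (fun z : Euc n => |z i0| ^ (1 - a)) x‖) (ball (0 : Euc n) ρ) := by
      refine hGball.congr ?_
      exact ae_restrict_of_ae (hae.mono fun x hx => hx.symm)
    have hlow : (1 - a) * ρ ^ (-a) * (volume (ball (0 : Euc n) ρ)).toReal
        ≤ ∫ x in ball (0 : Euc n) ρ,
            ‖gradient (fun z : Euc n => |z i0| ^ (1 - a)) x‖ := by
      have hconst : IntegrableOn (fun _ : Euc n => (1 - a) * ρ ^ (-a))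
          (ball (0 : Euc n) ρ) :=
        integrableOn_const measure_ball_lt_top.ne
      have hle : ∀ᵐ x ∂(volume.restrict (ball (0 : Euc n) ρ)),
          (1 - a) * ρ ^ (-a) ≤ ‖gradient (fun z : Euc n => |z i0| ^ (1 - a)) x‖ := by
        filter_upwards [ae_restrict_mem measurableSet_ball, ae_restrict_of_ae hae,
          ae_restrict_of_ae hne0] with x hxb hxe hxn
        rw [hxe]
        refine mul_le_mul_of_nonneg_left ?_ h1a.le
        refine Real.rpow_le_rpow_of_nonpos (abs_pos.2 hxn) ?_ (by linarith)
        have := (hcoord x 0 i0).trans_lt (by simpa [dist_zero_right] using mem_ball.1 hxb)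
        simpa using this.le
      have := integral_mono_ae hconst hIg hle
      rwa [setIntegral_const, smul_eq_mul, mul_comm] at this
    have hvol : (volume (ball (0 : Euc n) ρ)).toReal = ρ ^ n * c := by
      rw [Measure.addHaar_ball volume (0 : Euc n) hρ0.le, ENNReal.toReal_mul,
        ENNReal.toReal_ofReal (by positivity), finrank_euclideanSpace_fin]
    -- combine
    rw [hinter] at hMb
    have hchain : (1 - a) * c * ρ ^ ((n:ℝ) - a) ≤ K * ρ ^ q := by
      have h2 : (1 - a) * ρ ^ (-a) * (ρ ^ n * c) = (1 - a) * c * ρ ^ ((n:ℝ) - a) := by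
        rw [← Real.rpow_natCast ρ n,
          show (1 - a) * ρ ^ (-a) * (ρ ^ ((n:ℕ):ℝ) * c)
            = (1 - a) * c * (ρ ^ (-a) * ρ ^ ((n:ℕ):ℝ)) from by ring,
          ← Real.rpow_add hρ0, show -a + ((n:ℕ):ℝ) = (n:ℝ) - a from by push_cast; ring]
      calc (1 - a) * c * ρ ^ ((n:ℝ) - a) = (1 - a) * ρ ^ (-a) * (ρ ^ n * c) := h2.symm
        _ = (1 - a) * ρ ^ (-a) * (volume (ball (0 : Euc n) ρ)).toReal := by rw [hvol]
        _ ≤ ∫ x in ball (0 : Euc n) ρ,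
              ‖gradient (fun z : Euc n => |z i0| ^ (1 - a)) x‖ := hlow
        _ ≤ K * ρ ^ ((n:ℝ) * (1 - 1 / ((n:ℝ) / a + b))) := hMb
        _ = K * ρ ^ q := by rw [hq, hp]
    have hqsplit : ρ ^ q = ρ ^ ((n:ℝ) - a) * ρ ^ δ := by
      rw [← Real.rpow_add hρ0, hδ]
      congr 1
      ring
    rw [hqsplit] at hchain
    have hρna : 0 < ρ ^ ((n:ℝ) - a) := Real.rpow_pos_of_pos hρ0 _
    have hfinal : (1 - a) * c ≤ K * ρ ^ δ := by
      have h3 : (1 - a) * c * ρ ^ ((n:ℝ) - a) ≤ (K * ρ ^ δ) * ρ ^ ((n:ℝ) - a) := by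
        calc (1 - a) * c * ρ ^ ((n:ℝ) - a) ≤ K * (ρ ^ ((n:ℝ) - a) * ρ ^ δ) := hchain
          _ = (K * ρ ^ δ) * ρ ^ ((n:ℝ) - a) := by ring
      exact le_of_mul_le_mul_right h3 hρna
    have hKε : K * ρ ^ δ < K * ε := mul_lt_mul_of_pos_left hρδ hK
    rw [hε, mul_div_cancel₀ _ hK.ne'] at hKε
    linarith
end
end

section
/- Let n ≥ 2 and α ∈ (0,1). Let u be a function on the unit ball B₁ ⊂ ℝⁿ, radially symmetric with respect to the origin (write u(x) = u(r) with r = |x|, u absolutely continuous on compact subintervals of (0,1)), and suppose there is K > 0 such that ∫_{B_ρ(0)} |∇u| dx ≤ K ρ^{n−1+α} for all 0 < ρ < 1. Then for all 0 < ρ₁ < ρ₂ < 1 one has |u(ρ₂) − u(ρ₁)| ≤ (K/ω_{n−1}) ρ₁^{1−n} ρ₂^{n−1+α}, where ω_{n−1} is the surface area of the unit sphere S^{n−1}. In particular there exists a constant C = C(n,α,K) with |u(ρ₂) − u(ρ₁)| ≤ C (ρ₂/ρ₁)^{n−1} ρ₂^{α}, and the limit lim_{t→0⁺} u(t) exists and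 is finite. -/
open MeasureTheory Metric Real Filter Asymptotics Bornology
open scoped RealInnerProductSpace Topology

noncomputable section

/-- The surface area `ω_{n-1}` of the unit sphere `S^{n-1} ⊂ ℝⁿ`, equal to `n` times the
volume of the unit ball. -/
def sphereArea (n : ℕ) : ℝ := (n : ℝ) * (volume (ball (0 : Euc n) 1)).toReal

lemma grad_radial {n : ℕ} (u : Euc n → ℝ) (g g' : ℝ → ℝ)
    (hradial : ∀ x ∈ ball (0 : Euc n) 1, u x = g ‖x‖)
    (hderiv : ∀ t ∈ Set.Ioo (0:ℝ) 1, HasDerivAt g (g' t) t)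
    {x : Euc n} (hx0 : x ≠ 0) (hx1 : ‖x‖ < 1) :
    HasGradientAt u ((g' ‖x‖ / ‖x‖) • x) x := by
  have hr : 0 < ‖x‖ := norm_pos_iff.2 hx0
  have hN : DifferentiableAt ℝ (fun y : Euc n => ‖y‖) x :=
    (contDiffAt_norm ℝ (n := 1) hx0).differentiableAt one_ne_zero
  set f' := fderiv ℝ (fun y : Euc n => ‖y‖) x with hf'
  have key : ∀ y : Euc n, f' y = ⟪x, y⟫ / ‖x‖ := by
    intro y
    have h1 : fderiv ℝ (fun t : Euc n => ⟪t, t⟫) x y = 2 * ⟪x, y⟫ := by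
      rw [fderiv_inner_apply (𝕜 := ℝ) differentiableAt_fun_id differentiableAt_fun_id]
      simp only [fderiv_id', ContinuousLinearMap.id_apply]
      rw [real_inner_comm y x]; ring
    have h2 : (fun t : Euc n => ⟪t, t⟫) = fun t : Euc n => ‖t‖ * ‖t‖ := by
      funext t; exact real_inner_self_eq_norm_mul_norm t
    have h3 : fderiv ℝ (fun t : Euc n => ‖t‖ * ‖t‖) x y = 2 * (‖x‖ * f' y) := by
      rw [fderiv_fun_mul hN hN]; simp [hf']; ring
    rw [h2, h3] at h1
    field_simp at h1 ⊢
    linarith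
  have hg : HasDerivAt g (g' ‖x‖) ‖x‖ := hderiv _ ⟨hr, hx1⟩
  have hcomp : HasFDerivAt (fun y : Euc n => g ‖y‖) (g' ‖x‖ • f') x :=
    hg.comp_hasFDerivAt x hN.hasFDerivAt
  have hu : HasFDerivAt u (g' ‖x‖ • f') x := by
    refine hcomp.congr_of_eventuallyEq ?_
    filter_upwards [isOpen_ball.mem_nhds (mem_ball_zero_iff.2 hx1)] with y hy
    exact hradial y hy
  rw [hasGradientAt_iff_hasFDerivAt]
  refine HasFDerivAt.congr_fderiv hu ?_
  ext y
  simp [InnerProductSpace.toDual_apply_apply, real_inner_smul_left, key y]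
  ring

lemma sphereArea_pos {n : ℕ} (hn : 1 ≤ n) : 0 < sphereArea n := by
  have h1 : (0:ℝ) < n := by exact_mod_cast Nat.lt_of_lt_of_le Nat.zero_lt_one hn
  refine mul_pos h1 (ENNReal.toReal_pos ?_ ?_)
  · exact (measure_ball_pos volume (0 : Euc n) one_pos).ne'
  · exact measure_ball_lt_top.ne

lemma key_bound {n : ℕ} (hn : 2 ≤ n) {α : ℝ} (hα : α ∈ Set.Ioo (0:ℝ) 1)
    (u : Euc n → ℝ) (g g' : ℝ → ℝ) {K : ℝ} (hK : 0 < K)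
    (hradial : ∀ x ∈ ball (0 : Euc n) 1, u x = g ‖x‖)
    (hderiv : ∀ t ∈ Set.Ioo (0:ℝ) 1, HasDerivAt g (g' t) t)
    (hint : ∀ ρ : ℝ, 0 < ρ → ρ < 1 →
      IntegrableOn (fun x => ‖gradient u x‖) (ball (0 : Euc n) ρ))
    (hbound : ∀ ρ : ℝ, 0 < ρ → ρ < 1 →
      ∫ x in ball (0 : Euc n) ρ, ‖gradient u x‖ ≤ K * ρ ^ ((n:ℝ) - 1 + α))
    {ρ₁ ρ₂ : ℝ} (h1 : 0 < ρ₁) (h12 : ρ₁ < ρ₂) (h2 : ρ₂ < 1) :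
    IntegrableOn (deriv g) (Set.Ioo ρ₁ ρ₂) ∧
    ∫ y in Set.Ioo ρ₁ ρ₂, |deriv g y| ≤
      (ρ₁ ^ (n-1))⁻¹ * (K * ρ₂ ^ ((n:ℝ) - 1 + α) / sphereArea n) := by
  haveI : Nonempty (Fin n) := ⟨⟨0, by omega⟩⟩
  have hρ₂ : 0 < ρ₂ := h1.trans h12
  have hω : 0 < sphereArea n := sphereArea_pos (by omega)
  set e : ℝ := (n:ℝ) - 1 + α with he
  set d : ℝ → ℝ := deriv g with hd
  have hdm : Measurable d := measurable_deriv g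
  set A : Set (Euc n) := (fun x : Euc n => ‖x‖) ⁻¹' (Set.Ioo ρ₁ ρ₂) with hA
  have hAmeas : MeasurableSet A := measurable_norm measurableSet_Ioo
  have hAsub : A ⊆ ball (0 : Euc n) ρ₂ := fun x hx => mem_ball_zero_iff.2 hx.2
  have hgrad : ∀ x ∈ A, ‖gradient u x‖ = |d ‖x‖| := by
    intro x hx
    have hr : 0 < ‖x‖ := h1.trans hx.1
    have hx0 : x ≠ 0 := fun h => by simp [h] at hr
    have hx1 : ‖x‖ < 1 := hx.2.trans h2
    rw [(grad_radial u g g' hradial hderiv hx0 hx1).gradient, norm_smul, Real.norm_eq_abs,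
      abs_div, abs_of_pos hr, div_mul_cancel₀ _ hr.ne',
      ← (hderiv _ ⟨hr, hx1⟩).deriv]
  have hIball : IntegrableOn (fun x => ‖gradient u x‖) (ball (0 : Euc n) ρ₂) :=
    hint ρ₂ hρ₂ h2
  have hIA : IntegrableOn (fun x => ‖gradient u x‖) A := hIball.mono_set hAsub
  have hAnn : ∫ x in A, ‖gradient u x‖ ≤ K * ρ₂ ^ e := by
    refine le_trans (setIntegral_mono_set hIball ?_ (HasSubset.Subset.eventuallyLE hAsub))
      (hbound ρ₂ hρ₂ h2)
    filter_upwards with x using norm_nonneg _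
  set F : ℕ → ℝ → ℝ := fun k y =>
    Set.indicator (Set.Ioo ρ₁ ρ₂) (fun y => min |d y| k) y with hF
  set J : ℕ → ℝ := fun k => ∫ y in Set.Ioo ρ₁ ρ₂, y ^ (n-1) * min |d y| k with hJdef
  -- polar coordinates identity
  have hpolar : ∀ k, ∫ x : Euc n, F k ‖x‖ = sphereArea n * J k := by
    intro k
    have hp := integral_fun_norm_addHaar (volume : Measure (Euc n)) (F k)
    rw [finrank_euclideanSpace_fin] at hp
    have hind : (fun y : ℝ => y ^ (n-1) • F k y)
        = Set.indicator (Set.Ioo ρ₁ ρ₂) (fun y => y ^ (n-1) * min |d y| k) := by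
      funext y
      by_cases hy : y ∈ Set.Ioo ρ₁ ρ₂ <;>
        simp [hF, Set.indicator_of_mem, Set.indicator_of_notMem, hy, smul_eq_mul]
    have hset : Set.Ioi (0:ℝ) ∩ Set.Ioo ρ₁ ρ₂ = Set.Ioo ρ₁ ρ₂ :=
      Set.inter_eq_right.2 fun y hy => h1.trans hy.1
    rw [hp, hind, setIntegral_indicator measurableSet_Ioo, hset]
    simp only [nsmul_eq_mul, smul_eq_mul, sphereArea, hJdef, measureReal_def]
    ring
  have hFx : ∀ k, (fun x : Euc n => F k ‖x‖)
      = Set.indicator A (fun x => min |d ‖x‖| k) := by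
    intro k; funext x
    by_cases hx : ‖x‖ ∈ Set.Ioo ρ₁ ρ₂ <;>
      simp [hF, hA, Set.indicator_of_mem, Set.indicator_of_notMem, hx, Set.mem_preimage]
  have hLHS : ∀ k, ∫ x : Euc n, F k ‖x‖ ≤ K * ρ₂ ^ e := by
    intro k
    rw [hFx k, integral_indicator hAmeas]
    have hIk : IntegrableOn (fun x : Euc n => min |d ‖x‖| k) A := by
      refine Integrable.mono hIA ?_ ?_
      · exact (((hdm.comp measurable_norm).abs.min measurable_const)).aestronglyMeasurable
      · filter_upwards [ae_restrict_mem hAmeas] with x hx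
        rw [Real.norm_eq_abs, Real.norm_eq_abs, hgrad x hx,
          abs_of_nonneg (le_min (abs_nonneg _) (Nat.cast_nonneg k)), abs_abs]
        exact min_le_left _ _
    refine le_trans (setIntegral_mono_on hIk hIA hAmeas fun x hx => ?_) hAnn
    rw [hgrad x hx]; exact min_le_left _ _
  have hJ : ∀ k, J k ≤ K * ρ₂ ^ e / sphereArea n := by
    intro k
    rw [le_div_iff₀ hω]
    calc J k * sphereArea n = sphereArea n * J k := by ring
    _ = ∫ x : Euc n, F k ‖x‖ := (hpolar k).symm
    _ ≤ K * ρ₂ ^ e := hLHS k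
  -- pass to lintegral and take supremum over k
  set I : ENNReal := ∫⁻ y in Set.Ioo ρ₁ ρ₂, ENNReal.ofReal (y ^ (n-1) * |d y|) with hI
  have hmink : ∀ k : ℕ, ∀ y, 0 ≤ min |d y| (k:ℝ) :=
    fun k y => le_min (abs_nonneg _) (Nat.cast_nonneg k)
  have hJk_int : ∀ k : ℕ, IntegrableOn (fun y => y ^ (n-1) * min |d y| (k:ℝ))
      (Set.Ioo ρ₁ ρ₂) := by
    intro k
    refine Integrable.mono' (integrable_const (k:ℝ)) ?_ ?_
    · exact ((measurable_id.pow_const _).mul (hdm.abs.min measurable_const)).aestronglyMeasurable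
    · filter_upwards [ae_restrict_mem measurableSet_Ioo] with y hy
      have hy0 : 0 < y := h1.trans hy.1
      have hy1 : y ^ (n-1) ≤ 1 := pow_le_one₀ hy0.le (hy.2.trans h2).le
      rw [Real.norm_eq_abs, abs_mul, abs_of_pos (pow_pos hy0 _),
        abs_of_nonneg (hmink k y)]
      calc y ^ (n-1) * min |d y| (k:ℝ) ≤ 1 * (k:ℝ) := by
            refine mul_le_mul hy1 (min_le_right _ _) (hmink k y) one_pos.le
      _ = (k:ℝ) := one_mul _
  have hJk_lint : ∀ k : ℕ, (∫⁻ y in Set.Ioo ρ₁ ρ₂,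
      ENNReal.ofReal (y ^ (n-1) * min |d y| (k:ℝ))) = ENNReal.ofReal (J k) := by
    intro k
    rw [← ofReal_integral_eq_lintegral_ofReal (hJk_int k) ?_]
    filter_upwards [ae_restrict_mem measurableSet_Ioo] with y hy
    exact mul_nonneg (pow_pos (h1.trans hy.1) _).le (hmink k y)
  have hI_le : I ≤ ENNReal.ofReal (K * ρ₂ ^ e / sphereArea n) := by
    have step1 : I ≤ ∫⁻ y in Set.Ioo ρ₁ ρ₂,
        ⨆ k : ℕ, ENNReal.ofReal (y ^ (n-1) * min |d y| (k:ℝ)) := by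
      refine lintegral_mono_ae ?_
      filter_upwards [ae_restrict_mem measurableSet_Ioo] with y _
      refine le_iSup_of_le ⌈|d y|⌉₊ ?_
      rw [min_eq_left (Nat.le_ceil _)]
    have step2 : (∫⁻ y in Set.Ioo ρ₁ ρ₂,
        ⨆ k : ℕ, ENNReal.ofReal (y ^ (n-1) * min |d y| (k:ℝ)))
        = ⨆ k : ℕ, ∫⁻ y in Set.Ioo ρ₁ ρ₂,
          ENNReal.ofReal (y ^ (n-1) * min |d y| (k:ℝ)) := by
      refine lintegral_iSup' (fun k => ?_) ?_
      · exact (((measurable_id.pow_const _).mul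
          (hdm.abs.min measurable_const)).ennreal_ofReal).aemeasurable
      · filter_upwards [ae_restrict_mem measurableSet_Ioo] with y hy
        intro i j hij
        refine ENNReal.ofReal_le_ofReal ?_
        have hy0 : (0:ℝ) ≤ y ^ (n-1) := (pow_pos (h1.trans hy.1) _).le
        exact mul_le_mul_of_nonneg_left
          (min_le_min le_rfl (by exact_mod_cast hij)) hy0
    refine step1.trans ?_
    rw [step2]
    exact iSup_le fun k => (hJk_lint k).le.trans (ENNReal.ofReal_le_ofReal (hJ k))
  -- compare |d| with y^(n-1)|d|
  set c : ℝ := (ρ₁ ^ (n-1))⁻¹ with hc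
  have hc0 : 0 ≤ c := (inv_pos.2 (pow_pos h1 _)).le
  have hpt : ∀ y ∈ Set.Ioo ρ₁ ρ₂, |d y| ≤ c * (y ^ (n-1) * |d y|) := by
    intro y hy
    have hp : (0:ℝ) < ρ₁ ^ (n-1) := pow_pos h1 _
    have hle : ρ₁ ^ (n-1) ≤ y ^ (n-1) := pow_le_pow_left₀ h1.le hy.1.le _
    calc |d y| = c * (ρ₁ ^ (n-1) * |d y|) := by
          rw [← mul_assoc, hc, inv_mul_cancel₀ hp.ne', one_mul]
    _ ≤ c * (y ^ (n-1) * |d y|) := by gcongr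
  have hlint_d : (∫⁻ y in Set.Ioo ρ₁ ρ₂, ENNReal.ofReal |d y|)
      ≤ ENNReal.ofReal c * ENNReal.ofReal (K * ρ₂ ^ e / sphereArea n) := by
    calc (∫⁻ y in Set.Ioo ρ₁ ρ₂, ENNReal.ofReal |d y|)
        ≤ ∫⁻ y in Set.Ioo ρ₁ ρ₂, ENNReal.ofReal c
            * ENNReal.ofReal (y ^ (n-1) * |d y|) := by
          refine lintegral_mono_ae ?_
          filter_upwards [ae_restrict_mem measurableSet_Ioo] with y hy
          rw [← ENNReal.ofReal_mul hc0]
          exact ENNReal.ofReal_le_ofReal (hpt y hy)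
    _ = ENNReal.ofReal c * I := lintegral_const_mul' _ _ ENNReal.ofReal_ne_top
    _ ≤ _ := mul_le_mul_right hI_le _
  have hfin : (∫⁻ y in Set.Ioo ρ₁ ρ₂, ENNReal.ofReal |d y|) < ⊤ :=
    lt_of_le_of_lt hlint_d (ENNReal.mul_lt_top ENNReal.ofReal_lt_top ENNReal.ofReal_lt_top)
  have hint_d : IntegrableOn d (Set.Ioo ρ₁ ρ₂) := by
    refine ⟨hdm.aestronglyMeasurable, ?_⟩
    rw [hasFiniteIntegral_iff_norm]
    simpa [Real.norm_eq_abs] using hfin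
  refine ⟨hint_d, ?_⟩
  have hB : (0:ℝ) ≤ K * ρ₂ ^ e / sphereArea n := by positivity
  rw [integral_eq_lintegral_of_nonneg_ae
    (by filter_upwards with y using abs_nonneg _) hdm.abs.aestronglyMeasurable]
  rw [← ENNReal.ofReal_mul hc0] at hlint_d
  exact ENNReal.toReal_le_of_le_ofReal (by positivity) hlint_d

lemma osc {n : ℕ} (hn : 2 ≤ n) {α : ℝ} (hα : α ∈ Set.Ioo (0:ℝ) 1)
    (u : Euc n → ℝ) (g g' : ℝ → ℝ) {K : ℝ} (hK : 0 < K)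
    (hradial : ∀ x ∈ ball (0 : Euc n) 1, u x = g ‖x‖)
    (hderiv : ∀ t ∈ Set.Ioo (0:ℝ) 1, HasDerivAt g (g' t) t)
    (hint : ∀ ρ : ℝ, 0 < ρ → ρ < 1 →
      IntegrableOn (fun x => ‖gradient u x‖) (ball (0 : Euc n) ρ))
    (hbound : ∀ ρ : ℝ, 0 < ρ → ρ < 1 →
      ∫ x in ball (0 : Euc n) ρ, ‖gradient u x‖ ≤ K * ρ ^ ((n:ℝ) - 1 + α))
    {ρ₁ ρ₂ : ℝ} (h1 : 0 < ρ₁) (h12 : ρ₁ < ρ₂) (h2 : ρ₂ < 1) :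
    |g ρ₂ - g ρ₁| ≤ (ρ₁ ^ (n-1))⁻¹ * (K * ρ₂ ^ ((n:ℝ) - 1 + α) / sphereArea n) := by
  obtain ⟨hIoo, hbnd⟩ := key_bound hn hα u g g' hK hradial hderiv hint hbound h1 h12 h2
  have hIoc : IntegrableOn (deriv g) (Set.Ioc ρ₁ ρ₂) :=
    hIoo.congr_set_ae Ioo_ae_eq_Ioc.symm
  have hii : IntervalIntegrable (deriv g) volume ρ₁ ρ₂ :=
    (intervalIntegrable_iff_integrableOn_Ioc_of_le h12.le).2 hIoc
  have hftc : g ρ₂ - g ρ₁ = ∫ y in ρ₁..ρ₂, deriv g y := by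
    refine (intervalIntegral.integral_eq_sub_of_hasDerivAt (fun t ht => ?_) hii).symm
    rw [Set.uIcc_of_le h12.le] at ht
    have ht' : t ∈ Set.Ioo (0:ℝ) 1 := ⟨h1.trans_le ht.1, lt_of_le_of_lt ht.2 h2⟩
    have := hderiv t ht'
    rwa [← this.deriv] at this
  calc |g ρ₂ - g ρ₁| = |∫ y in ρ₁..ρ₂, deriv g y| := by rw [hftc]
  _ ≤ ∫ y in ρ₁..ρ₂, |deriv g y| := by
      simpa [Real.norm_eq_abs] using
        intervalIntegral.norm_integral_le_integral_norm (μ := volume)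
          (f := deriv g) h12.le
  _ = ∫ y in Set.Ioo ρ₁ ρ₂, |deriv g y| := by
      rw [intervalIntegral.integral_of_le h12.le, integral_Ioc_eq_integral_Ioo]
  _ ≤ _ := hbnd

/-- **Oscillation estimate and existence of the limit at the origin for radial functions
with a Morrey-type gradient bound.**
Let `n ≥ 2`, `α ∈ (0,1)`, and let `u` on `B₁ ⊂ ℝⁿ` be radially symmetric, `u(x) = g(|x|)`,
with `g` absolutely continuous on compact subintervals of `(0,1)` (here encoded by a radial
derivative `g'` with `HasDerivAt g (g' t) t` on `(0,1)`), and suppose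
`∫_{B_ρ} |∇u| ≤ K ρ^{n-1+α}` for all `0 < ρ < 1`.  Then
`|u(ρ₂) - u(ρ₁)| ≤ (K/ω_{n-1}) ρ₁^{1-n} ρ₂^{n-1+α}` for `0 < ρ₁ < ρ₂ < 1`; in particular
there is `C = C(n,α,K)` with `|u(ρ₂) - u(ρ₁)| ≤ C (ρ₂/ρ₁)^{n-1} ρ₂^{α}`, and
`lim_{t→0⁺} u(t)` exists and is finite. -/
theorem stmt_17 (n : ℕ) (hn : 2 ≤ n) (α : ℝ) (hα : α ∈ Set.Ioo (0:ℝ) 1)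
    (u : Euc n → ℝ) (g g' : ℝ → ℝ) (K : ℝ) (hK : 0 < K)
    (hradial : ∀ x ∈ ball (0 : Euc n) 1, u x = g ‖x‖)
    (hderiv : ∀ t ∈ Set.Ioo (0:ℝ) 1, HasDerivAt g (g' t) t)
    (hint : ∀ ρ : ℝ, 0 < ρ → ρ < 1 →
      IntegrableOn (fun x => ‖gradient u x‖) (ball (0 : Euc n) ρ))
    (hbound : ∀ ρ : ℝ, 0 < ρ → ρ < 1 →
      ∫ x in ball (0 : Euc n) ρ, ‖gradient u x‖ ≤ K * ρ ^ ((n:ℝ) - 1 + α)) :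
    (∀ ρ₁ ρ₂ : ℝ, 0 < ρ₁ → ρ₁ < ρ₂ → ρ₂ < 1 →
      |g ρ₂ - g ρ₁| ≤ K / sphereArea n * ρ₁ ^ (1 - (n:ℝ)) * ρ₂ ^ ((n:ℝ) - 1 + α)) ∧
    (∃ C > (0:ℝ), ∀ ρ₁ ρ₂ : ℝ, 0 < ρ₁ → ρ₁ < ρ₂ → ρ₂ < 1 →
      |g ρ₂ - g ρ₁| ≤ C * (ρ₂ / ρ₁) ^ ((n:ℝ) - 1) * ρ₂ ^ α) ∧
    (∃ M : ℝ, Filter.Tendsto g (𝓝[>] (0:ℝ)) (𝓝 M)) := by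
  have hω : 0 < sphereArea n := sphereArea_pos (by omega)
  have hα0 := hα.1
  -- part 1
  have part1 : ∀ ρ₁ ρ₂ : ℝ, 0 < ρ₁ → ρ₁ < ρ₂ → ρ₂ < 1 →
      |g ρ₂ - g ρ₁| ≤ K / sphereArea n * ρ₁ ^ (1 - (n:ℝ)) * ρ₂ ^ ((n:ℝ) - 1 + α) := by
    intro ρ₁ ρ₂ h1 h12 h2
    have hosc := osc hn hα u g g' hK hradial hderiv hint hbound h1 h12 h2
    have hcast : ρ₁ ^ (1 - (n:ℝ)) = (ρ₁ ^ (n-1))⁻¹ := by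
      rw [show (1 - (n:ℝ)) = -(((n-1 : ℕ) : ℝ)) by
          push_cast [Nat.cast_sub (show 1 ≤ n by omega)]; ring,
        Real.rpow_neg h1.le, Real.rpow_natCast]
    rw [hcast]
    calc |g ρ₂ - g ρ₁| ≤ (ρ₁ ^ (n-1))⁻¹ * (K * ρ₂ ^ ((n:ℝ) - 1 + α) / sphereArea n) := hosc
    _ = K / sphereArea n * (ρ₁ ^ (n-1))⁻¹ * ρ₂ ^ ((n:ℝ) - 1 + α) := by ring
  -- part 2
  set C : ℝ := K / sphereArea n with hC
  have hCpos : 0 < C := div_pos hK hω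
  have part2 : ∀ ρ₁ ρ₂ : ℝ, 0 < ρ₁ → ρ₁ < ρ₂ → ρ₂ < 1 →
      |g ρ₂ - g ρ₁| ≤ C * (ρ₂ / ρ₁) ^ ((n:ℝ) - 1) * ρ₂ ^ α := by
    intro ρ₁ ρ₂ h1 h12 h2
    have hρ₂ : 0 < ρ₂ := h1.trans h12
    have heq : C * (ρ₂ / ρ₁) ^ ((n:ℝ) - 1) * ρ₂ ^ α
        = K / sphereArea n * ρ₁ ^ (1 - (n:ℝ)) * ρ₂ ^ ((n:ℝ) - 1 + α) := by
      rw [Real.div_rpow hρ₂.le h1.le, Real.rpow_add hρ₂,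
        show (1 - (n:ℝ)) = -((n:ℝ) - 1) by ring, Real.rpow_neg h1.le]
      rw [hC]
      field_simp [hω.ne']
    rw [heq]
    exact part1 ρ₁ ρ₂ h1 h12 h2
  refine ⟨part1, ⟨C, hCpos, part2⟩, ?_⟩
  -- part 3 : uniform bound by dyadic chaining
  have h2α : (0:ℝ) < 1 - (2:ℝ) ^ (-α) := by
    have : (2:ℝ) ^ (-α) < 1 :=
      Real.rpow_lt_one_of_one_lt_of_neg one_lt_two (neg_neg_of_pos hα0)
    linarith
  set X : ℝ := C * (2:ℝ) ^ ((n:ℝ) - 1) with hX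
  have hXpos : 0 < X := mul_pos hCpos (Real.rpow_pos_of_pos two_pos _)
  set D : ℝ := X / (1 - (2:ℝ) ^ (-α)) with hD
  have hDpos : 0 < D := div_pos hXpos h2α
  have hDX : D * (1 - (2:ℝ) ^ (-α)) = X := div_mul_cancel₀ _ h2α.ne'
  have base : ∀ a b : ℝ, 0 < a → a < b → b < 1 → b ≤ 2 * a →
      |g b - g a| ≤ X * b ^ α := by
    intro a b ha hab hb1 hba
    have hb : 0 < b := ha.trans hab
    have hdiv : b / a ≤ 2 := (div_le_iff₀ ha).2 (by linarith)
    have hexp : (0:ℝ) ≤ (n:ℝ) - 1 := by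
      have : (2:ℝ) ≤ (n:ℝ) := by exact_mod_cast hn
      linarith
    calc |g b - g a| ≤ C * (b / a) ^ ((n:ℝ) - 1) * b ^ α := part2 a b ha hab hb1
    _ ≤ C * (2:ℝ) ^ ((n:ℝ) - 1) * b ^ α := by
        gcongr
    _ = X * b ^ α := by rw [hX]
  have claim : ∀ k : ℕ, ∀ ρ₁ ρ₂ : ℝ, 0 < ρ₁ → ρ₁ < ρ₂ → ρ₂ < 1 →
      ρ₂ ≤ ρ₁ * 2 ^ k → |g ρ₂ - g ρ₁| ≤ D * ρ₂ ^ α := by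
    intro k
    induction k with
    | zero => intro ρ₁ ρ₂ h1 h12 h2 hk; simp at hk; linarith
    | succ k ih =>
      intro ρ₁ ρ₂ h1 h12 h2 hk
      have hρ₂ : 0 < ρ₂ := h1.trans h12
      by_cases hcase : ρ₂ ≤ 2 * ρ₁
      · refine (base ρ₁ ρ₂ h1 h12 h2 hcase).trans ?_
        have hXD : X ≤ D := by
          rw [hD, le_div_iff₀ h2α]
          nlinarith [Real.rpow_pos_of_pos two_pos (-α), hXpos]
        gcongr
      · push_neg at hcase
        set m : ℝ := ρ₂ / 2 with hm
        have h1m : ρ₁ < m := by rw [hm]; linarith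
        have hm2 : m < ρ₂ := by rw [hm]; linarith
        have hm0 : 0 < m := h1.trans h1m
        have hmk : m ≤ ρ₁ * 2 ^ k := by
          rw [hm]
          rw [pow_succ] at hk
          linarith
        have hIH : |g m - g ρ₁| ≤ D * m ^ α := ih ρ₁ m h1 h1m (hm2.trans h2) hmk
        have hB : |g ρ₂ - g m| ≤ X * ρ₂ ^ α :=
          base m ρ₂ hm0 hm2 h2 (by rw [hm]; linarith)
        have hmα : m ^ α = ρ₂ ^ α * (2:ℝ) ^ (-α) := by
          rw [hm, Real.div_rpow hρ₂.le (by norm_num), Real.rpow_neg (by norm_num : (0:ℝ) ≤ 2)]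
          ring
        calc |g ρ₂ - g ρ₁| ≤ |g ρ₂ - g m| + |g m - g ρ₁| := abs_sub_le _ _ _
        _ ≤ X * ρ₂ ^ α + D * (ρ₂ ^ α * (2:ℝ) ^ (-α)) := by
            refine add_le_add hB ?_
            rw [← hmα]; exact hIH
        _ = D * ρ₂ ^ α := by rw [← hDX]; ring
  have uniform : ∀ ρ₁ ρ₂ : ℝ, 0 < ρ₁ → ρ₁ < ρ₂ → ρ₂ < 1 →
      |g ρ₂ - g ρ₁| ≤ D * ρ₂ ^ α := by
    intro ρ₁ ρ₂ h1 h12 h2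
    obtain ⟨k, hk⟩ := pow_unbounded_of_one_lt (ρ₂ / ρ₁) (one_lt_two (α := ℝ))
    exact claim k ρ₁ ρ₂ h1 h12 h2 (by rw [div_lt_iff₀ h1] at hk; linarith)
  -- Cauchy
  have htend0 : Tendsto (fun t : ℝ => D * t ^ α) (𝓝[>] (0:ℝ)) (𝓝 0) := by
    have hc : ContinuousAt (fun t : ℝ => t ^ α) 0 :=
      Real.continuousAt_rpow_const 0 α (Or.inr hα0.le)
    have : Tendsto (fun t : ℝ => D * t ^ α) (𝓝 (0:ℝ)) (𝓝 (D * (0:ℝ) ^ α)) :=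
      (continuousAt_const.mul hc).tendsto
    rw [Real.zero_rpow hα0.ne', mul_zero] at this
    exact this.mono_left nhdsWithin_le_nhds
  have hcauchy : Cauchy (Filter.map g (𝓝[>] (0:ℝ))) := by
    rw [cauchy_map_iff]
    refine ⟨inferInstance, ?_⟩
    rw [Metric.uniformity_basis_dist.tendsto_right_iff]
    intro ε hε
    have h1' : ∀ᶠ t in 𝓝[>] (0:ℝ), D * t ^ α < ε / 2 :=
      htend0.eventually_lt_const (by linarith)
    have h2' : ∀ᶠ t in 𝓝[>] (0:ℝ), t < 1 :=
      (eventually_lt_nhds one_pos).filter_mono nhdsWithin_le_nhds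
    have h3' : ∀ᶠ t in 𝓝[>] (0:ℝ), (0:ℝ) < t := eventually_mem_nhdsWithin
    have hE := (h1'.and h2').and h3'
    filter_upwards [hE.prod_inl (𝓝[>] (0:ℝ)), hE.prod_inr (𝓝[>] (0:ℝ))] with p hp1 hp2
    obtain ⟨⟨ha1, ha2⟩, ha3⟩ := hp1
    obtain ⟨⟨hb1, hb2⟩, hb3⟩ := hp2
    rcases lt_trichotomy p.1 p.2 with h | h | h
    · rw [Real.dist_eq, abs_sub_comm]
      calc |g p.2 - g p.1| ≤ D * p.2 ^ α := uniform p.1 p.2 ha3 h hb2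
      _ < ε / 2 := hb1
      _ < ε := by linarith
    · simp [h, hε]
    · rw [Real.dist_eq]
      calc |g p.1 - g p.2| ≤ D * p.1 ^ α := uniform p.2 p.1 hb3 h ha2
      _ < ε / 2 := ha1
      _ < ε := by linarith
  obtain ⟨M, hM⟩ := cauchy_map_iff_exists_tendsto.mp hcauchy
  exact ⟨M, hM⟩
end
end
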